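/- arXiv:math/0504042 — 5 statements merged into one kernel-verified Lean document; each statement's English description precedes it below -/
import Mathlib

section
/- Let ν ≥ 1 and g ≥ 1 be integers, and let m, n_1, …, n_g ∈ ℤ satisfy: (a) 2m + n_1 + ⋯ + n_g = 1; (b) ν·m ≥ 0 and ν·(m + n_1 + ⋯ + n_g) ≥ 0; (c) for each i, ν·(1 + n_i) ≥ 0 and ν·(1 − n_i) ≥ 0; (d) for each pair i ≠ j, ν·(1 + n_i + n_j) ≥ 0 and ν·(1 − n_i − n_j) ≥ 0. Then either there exists a unique index i with n_i = 1, all other n_j = 0, and m = 0; or there exists a unique index j with n_j = −1, all other n_i = 0, and m = 1. -/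
/-- Combinatorial core of Proposition 2: integer exponents `m, n_i` satisfying
the valuation inequalities must come from a conjugate of `π` (either a unique
`n_i = 1` with `m = 0`, or a unique `n_j = -1` with `m = 1`). -/
theorem weil_exponents_classification (ν : ℤ) (hν : 1 ≤ ν) (g : ℕ) (hg : 1 ≤ g)
    (m : ℤ) (n : Fin g → ℤ)
    (ha : 2 * m + ∑ i, n i = 1)
    (hb1 : 0 ≤ ν * m) (hb2 : 0 ≤ ν * (m + ∑ i, n i))
    (hc : ∀ i, 0 ≤ ν * (1 + n i) ∧ 0 ≤ ν * (1 - n i))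
    (hd : ∀ i j, i ≠ j → 0 ≤ ν * (1 + n i + n j) ∧ 0 ≤ ν * (1 - n i - n j)) :
    (∃ i, n i = 1 ∧ (∀ j, j ≠ i → n j = 0) ∧ m = 0) ∨
    (∃ j, n j = -1 ∧ (∀ i, i ≠ j → n i = 0) ∧ m = 1) := by
  have key : ∀ x : ℤ, 0 ≤ ν * x → 0 ≤ x := by
    intro x h
    nlinarith
  have hm0 : 0 ≤ m := key m hb1
  have hs : ∑ i, n i = 1 - 2 * m := by linarith
  have hm1 : m ≤ 1 := by
    have := key _ hb2
    omega
  have hn : ∀ i, -1 ≤ n i ∧ n i ≤ 1 := by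
    intro i
    have h1 := key _ (hc i).1
    have h2 := key _ (hc i).2
    omega
  have hpair : ∀ i j, i ≠ j → -1 ≤ n i + n j ∧ n i + n j ≤ 1 := by
    intro i j hij
    have h1 := key _ (hd i j hij).1
    have h2 := key _ (hd i j hij).2
    omega
  have hm : m = 0 ∨ m = 1 := by omega
  rcases hm with hm | hm
  · left
    have hs1 : ∑ i, n i = 1 := by omega
    have hex : ∃ i, n i = 1 := by
      by_contra h
      push_neg at h
      have hle : ∑ i, n i ≤ 0 := by
        apply Finset.sum_nonpos
        intro i _
        have := hn i
        have := h i
        omega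
      omega
    obtain ⟨i, hi⟩ := hex
    refine ⟨i, hi, ?_, hm⟩
    have hsum : n i + ∑ j ∈ Finset.univ.erase i, n j = ∑ j, n j :=
      Finset.add_sum_erase Finset.univ n (Finset.mem_univ i)
    have hzero : ∑ j ∈ Finset.univ.erase i, n j = 0 := by omega
    have hall := (Finset.sum_eq_zero_iff_of_nonpos ?_).mp hzero
    · intro j hj
      exact hall j (Finset.mem_erase.mpr ⟨hj, Finset.mem_univ j⟩)
    · intro j hj
      have hji : j ≠ i := (Finset.mem_erase.mp hj).1
      have := hpair j i hji
      omega
  · right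
    have hs1 : ∑ i, n i = -1 := by omega
    have hex : ∃ i, n i = -1 := by
      by_contra h
      push_neg at h
      have hle : 0 ≤ ∑ i, n i := by
        apply Finset.sum_nonneg
        intro i _
        have := hn i
        have := h i
        omega
      omega
    obtain ⟨i, hi⟩ := hex
    refine ⟨i, hi, ?_, hm⟩
    have hsum : n i + ∑ j ∈ Finset.univ.erase i, n j = ∑ j, n j :=
      Finset.add_sum_erase Finset.univ n (Finset.mem_univ i)
    have hzero : ∑ j ∈ Finset.univ.erase i, n j = 0 := by omega
    have hall := (Finset.sum_eq_zero_iff_of_nonneg ?_).mp hzero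
    · intro j hj
      exact hall j (Finset.mem_erase.mpr ⟨hj, Finset.mem_univ j⟩)
    · intro j hj
      have hji : j ≠ i := (Finset.mem_erase.mp hj).1
      have := hpair j i hji
      omega
end

section
/- Let π be a q-Weil number with [ℚ(π):ℚ] = 2g, Galois closure K with group G, conjugates (π_i, q/π_i) for 1 ≤ i ≤ g. Assume: (1) for each i, π_i and q/π_i are coprime in K (no prime of K divides both); (2) for each i there exists σ_i ∈ G fixing π_i and sending π_j to q/π_j for all j ≠ i. Then every q-Weil number lying in the multiplicative subgroup of K^× generated by π_1, …, π_g, q/π_1, …, q/π_g is a conjugate of π (i.e., equals some π_i or q/π_i). -/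
/-!
Write `α = q ^ B * ∏ π_j ^ d_j` with `q = p ^ k`, using `π'_j = q / π_j`. Comparing absolute
values under `ι` gives `∑ d_j + 2 B = 1`. Fix a prime `v` above `p` and put `N = ord_v q > 0`;
coprimality of `π_j` and `π'_j` gives `ord_v π'_j - ord_v π_j = ±N`. Since `c ∘ σ_i` swaps
exactly the `i`-th pair, every set `T` of pairs is swapped by some automorphism `θ`, and as
`θ α` and `θ (c α)` are integral with product `q`,
`ord_v (θ α) = ord_v α + ∑_{j ∈ T} ±d_j N` lies in `[0, N]` for every `T`. Hence
`∑ |d_j| ≤ 1`, and by parity `d = ±e_i`, i.e. `α = π_i` or `α = q / π_i = π'_i`.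
-/

open IsDedekindDomain NumberField
open scoped symmDiff

lemma sum_abs_le_of_forall_add_sum_mem_Icc {α ι : Type*} [AddCommGroup α] [LinearOrder α]
    [IsOrderedAddMonoid α] [Fintype ι] {t : ι → α} {u N : α}
    (h : ∀ T : Finset ι, u + ∑ j ∈ T, t j ∈ Set.Icc 0 N) : ∑ j, |t j| ≤ N := by
  classical
  set P := Finset.univ.filter fun j => 0 ≤ t j
  set M := Finset.univ.filter fun j => ¬0 ≤ t j
  rw [← Finset.sum_filter_add_sum_filter_not Finset.univ (fun j => 0 ≤ t j),
    Finset.sum_congr rfl fun j hj => abs_of_nonneg (Finset.mem_filter.1 hj).2,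
    Finset.sum_congr rfl fun j hj => abs_of_neg (not_le.1 (Finset.mem_filter.1 hj).2),
    Finset.sum_neg_distrib]
  calc ∑ j ∈ P, t j + -∑ j ∈ M, t j = (u + ∑ j ∈ P, t j) - (u + ∑ j ∈ M, t j) := by abel
    _ ≤ N - 0 := sub_le_sub (h P).2 (h M).1
    _ = N := sub_zero N

lemma exists_eq_single_of_sum_abs_le_one {ι : Type*} [Fintype ι] {d : ι → ℤ} {B : ℤ}
    (habs : ∑ j, |d j| ≤ 1) (hsum : ∑ j, d j + 2 * B = 1) :
    ∃ i, (∀ j, j ≠ i → d j = 0) ∧ (d i = 1 ∧ B = 0 ∨ d i = -1 ∧ B = 1) := by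
  classical
  obtain ⟨i, -, hi⟩ := Finset.exists_ne_zero_of_sum_ne_zero (s := Finset.univ) (f := d)
    (by omega)
  have hsplit := Finset.add_sum_erase Finset.univ (fun j => |d j|) (Finset.mem_univ i)
  have hrest_nonneg := Finset.sum_nonneg fun j (_ : j ∈ Finset.univ.erase i) => abs_nonneg (d j)
  have hi_pos := abs_pos.2 hi
  have hzero : ∀ j, j ≠ i → d j = 0 := fun j hj => abs_eq_zero.1 <|
    (Finset.sum_eq_zero_iff_of_nonneg fun j _ => abs_nonneg (d j)).1 (by omega) j
      (Finset.mem_erase.2 ⟨hj, Finset.mem_univ j⟩)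
  rw [Finset.sum_eq_single i (fun j _ hj => hzero j hj) (by simp)] at hsum
  have := abs_le.1 (show |d i| ≤ 1 by omega)
  exact ⟨i, hzero, by omega⟩

lemma prod_zpow_eq_zpow_sum₀ {G₀ ι : Type*} [CommGroupWithZero G₀] {a : G₀} (ha : a ≠ 0)
    (s : Finset ι) (f : ι → ℤ) : ∏ i ∈ s, a ^ f i = a ^ ∑ i ∈ s, f i :=
  Finset.cons_induction (by simp)
    (fun _ _ _ h => by rw [Finset.prod_cons, Finset.sum_cons, zpow_add₀ ha, h]) s

lemma prod_zpow_mul_prod_zpow_eq {G₀ ι : Type*} [CommGroupWithZero G₀] [Fintype ι]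
    {x y : ι → G₀} {Q : G₀} (hxy : ∀ j, x j * y j = Q) (hQ : Q ≠ 0) (a b : ι → ℤ) :
    (∏ j, x j ^ a j) * ∏ j, y j ^ b j = Q ^ (∑ j, b j) * ∏ j, x j ^ (a j - b j) := by
  have hterm : ∀ j, x j ^ a j * y j ^ b j = Q ^ b j * x j ^ (a j - b j) := fun j => by
    have hx : x j ≠ 0 := left_ne_zero_of_mul (hxy j ▸ hQ)
    rw [← hxy j, mul_zpow, zpow_sub₀ hx]
    field_simp
  rw [← Finset.prod_mul_distrib, Finset.prod_congr rfl fun j _ => hterm j,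
    Finset.prod_mul_distrib, prod_zpow_eq_zpow_sum₀ hQ]

lemma sum_add_two_mul_eq_one_of_norm_eq {K L ι : Type*} [Field K] [NormedField L] [Fintype ι]
    (φ : K →+* L) {s : ℝ} (hs : 1 < s) {x : ι → K} (hx : ∀ j, ‖φ (x j)‖ = s) {Q : K}
    (hQ : ‖φ Q‖ = s ^ 2) {d : ι → ℤ} {B : ℤ} (h : ‖φ (Q ^ B * ∏ j, x j ^ d j)‖ = s) :
    ∑ j, d j + 2 * B = 1 := by
  have hs0 : s ≠ 0 := by positivity
  simp only [map_mul, map_zpow₀, map_prod, norm_mul, norm_zpow, norm_prod, hx, hQ,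
    prod_zpow_eq_zpow_sum₀ hs0, ← zpow_natCast, ← zpow_mul, ← zpow_add₀ hs0] at h
  have := zpow_right_injective₀ (by positivity) hs.ne' (h.trans (zpow_one s).symm)
  push_cast at this
  omega

lemma mul_map_eq_of_map_eq_norm_sq {K : Type*} [Field K] (ι : K →+* ℂ) {c : K → K}
    (hι : ∀ x, ι (c x) = starRingEnd ℂ (ι x)) {x Q : K} (hQ : ι Q = (‖ι x‖ ^ 2 : ℝ)) :
    x * c x = Q := by
  apply ι.injective
  rw [map_mul, hι, Complex.mul_conj, Complex.normSq_eq_norm_sq, hQ]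

section Exchanges

variable {K ι : Type*}

def Exchanges (x y : ι → K) (θ : K → K) (T : Finset ι) : Prop :=
  ∀ j, (j ∈ T → θ (x j) = y j ∧ θ (y j) = x j) ∧ (j ∉ T → θ (x j) = x j ∧ θ (y j) = y j)

lemma Exchanges.comp [DecidableEq ι] {x y : ι → K} {θ₁ θ₂ : K → K} {T₁ T₂ : Finset ι}
    (h₁ : Exchanges x y θ₁ T₁) (h₂ : Exchanges x y θ₂ T₂) :
    Exchanges x y (θ₂ ∘ θ₁) (T₁ ∆ T₂) := by
  intro j
  obtain ⟨h₁in, h₁out⟩ := h₁ j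
  obtain ⟨h₂in, h₂out⟩ := h₂ j
  by_cases hj₁ : j ∈ T₁ <;> by_cases hj₂ : j ∈ T₂ <;> simp_all [Finset.mem_symmDiff]

lemma map_eq_of_mul_eq [CommMonoidWithZero K] [IsLeftCancelMulZero K] {G : Type*} [FunLike G K K] [MonoidHomClass G K K] (θ : G)
    {x y x' y' Q : K} (hQ : θ Q = Q) (hxy : x * y = Q) (hxy' : x' * y' = Q) (hx' : x' ≠ 0)
    (h : θ x = x') : θ y = y' :=
  mul_left_cancel₀ hx' (by rw [← h, ← map_mul, hxy, hQ, h, hxy'])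

lemma exchanges_of_map_fst [CommMonoidWithZero K] [IsLeftCancelMulZero K] {G : Type*} [FunLike G K K] [MonoidHomClass G K K]
    {x y : ι → K} {Q : K} (hxy : ∀ j, x j * y j = Q) (hQ0 : Q ≠ 0) (θ : G) (hQ : θ Q = Q)
    (T : Finset ι) (hin : ∀ j ∈ T, θ (x j) = y j) (hout : ∀ j ∉ T, θ (x j) = x j) :
    Exchanges x y θ T := by
  have hyx : ∀ j, y j * x j = Q := fun j => mul_comm (y j) (x j) ▸ hxy j
  refine fun j => ⟨fun hj => ⟨hin j hj, ?_⟩, fun hj => ⟨hout j hj, ?_⟩⟩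
  · exact map_eq_of_mul_eq θ hQ (hxy j) (hyx j) (right_ne_zero_of_mul (hxy j ▸ hQ0)) (hin j hj)
  · exact map_eq_of_mul_eq θ hQ (hxy j) (hxy j) (left_ne_zero_of_mul (hxy j ▸ hQ0)) (hout j hj)

/-- `c ∘ σ i` exchanges exactly the `i`-th pair, and such automorphisms compose. -/
lemma exists_exchanges [CommRing K] [IsDomain K] {F : Type*} [CommRing F] [Algebra F K] [Fintype ι]
    [DecidableEq ι] {x y : ι → K} {Q : K} (hxy : ∀ j, x j * y j = Q) (hQ0 : Q ≠ 0)
    (hQ : ∀ θ : K ≃ₐ[F] K, θ Q = Q) {c : K ≃ₐ[F] K} (hc : ∀ j, c (x j) = y j)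
    (hσ : ∀ i, ∃ σ : K ≃ₐ[F] K, σ (x i) = x i ∧ ∀ j, j ≠ i → σ (x j) = y j) (T : Finset ι) :
    ∃ θ : K ≃ₐ[F] K, Exchanges x y θ T := by
  have hc' : Exchanges x y c Finset.univ :=
    exchanges_of_map_fst hxy hQ0 c (hQ c) _ (fun j _ => hc j) (by simp)
  have hρ : ∀ i, ∃ ρ : K ≃ₐ[F] K, Exchanges x y ρ {i} := by
    intro i
    obtain ⟨σ, hσi, hσj⟩ := hσ i
    have hσ' : Exchanges x y σ (Finset.univ.erase i) :=
      exchanges_of_map_fst hxy hQ0 σ (hQ σ) _ (fun j hj => hσj j (Finset.ne_of_mem_erase hj))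
        (fun j hj => (show j = i by simpa using hj) ▸ hσi)
    refine ⟨σ.trans c, ?_⟩
    rw [AlgEquiv.coe_trans,
      show {i} = Finset.univ.erase i ∆ Finset.univ by ext; simp [Finset.mem_symmDiff]]
    exact hσ'.comp hc'
  induction T using Finset.induction with
  | empty => exact ⟨AlgEquiv.refl, fun j => ⟨by simp, fun _ => ⟨rfl, rfl⟩⟩⟩
  | insert i T hi ih =>
    obtain ⟨θ, hθ⟩ := ih
    obtain ⟨ρ, hρi⟩ := hρ i
    refine ⟨θ.trans ρ, ?_⟩
    rw [AlgEquiv.coe_trans, show insert i T = T ∆ {i} by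
      ext j; by_cases hj : j = i <;> simp [Finset.mem_symmDiff, hj, hi]]
    exact hθ.comp hρi

end Exchanges

namespace IsDedekindDomain.HeightOneSpectrum

variable {R : Type*} [CommRing R] [IsDedekindDomain R] {K : Type*} [Field K] [Algebra R K]
  [IsFractionRing R K] (v : HeightOneSpectrum R)

/-- The exponent of `v` in `x`, so that `v.valuation K x = exp (-v.ord x)`;
junk value `v.ord 0 = 0`. -/
noncomputable def ord (x : K) : ℤ := -WithZero.log (v.valuation K x)

lemma ord_mul {x y : K} (hx : x ≠ 0) (hy : y ≠ 0) : v.ord (x * y) = v.ord x + v.ord y := by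
  rw [ord, map_mul, WithZero.log_mul ((v.valuation K).ne_zero_iff.2 hx)
    ((v.valuation K).ne_zero_iff.2 hy), neg_add, ord, ord]

lemma ord_zpow (x : K) (n : ℤ) : v.ord (x ^ n) = n * v.ord x := by
  simp [ord, map_zpow₀, WithZero.log_zpow]

lemma ord_prod {ι : Type*} (s : Finset ι) {f : ι → K} (hf : ∀ i ∈ s, f i ≠ 0) :
    v.ord (∏ i ∈ s, f i) = ∑ i ∈ s, v.ord (f i) := by
  classical
  induction s using Finset.induction with
  | empty => simp [ord]
  | insert i s hi ih =>
    rw [Finset.prod_insert hi, Finset.sum_insert hi, v.ord_mul (hf i (s.mem_insert_self i))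
      (Finset.prod_ne_zero_iff.2 fun j hj => hf j (Finset.mem_insert_of_mem hj)),
      ih fun j hj => hf j (Finset.mem_insert_of_mem hj)]

lemma ord_zpow_mul_prod_zpow {ι : Type*} [Fintype ι] {Q : K} (hQ : Q ≠ 0) (B : ℤ) {x : ι → K}
    (hx : ∀ j, x j ≠ 0) (d : ι → ℤ) :
    v.ord (Q ^ B * ∏ j, x j ^ d j) = B * v.ord Q + ∑ j, d j * v.ord (x j) := by
  rw [v.ord_mul (zpow_ne_zero B hQ) (Finset.prod_ne_zero_iff.2 fun j _ => zpow_ne_zero _ (hx j)),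
    v.ord_zpow, v.ord_prod _ fun j _ => zpow_ne_zero _ (hx j)]
  simp only [v.ord_zpow]

lemma ord_algebraMap_nonneg (r : R) : 0 ≤ v.ord (algebraMap R K r) := by
  by_cases hr : r = 0
  · simp [hr, ord]
  have h := v.valuation_le_one (K := K) r
  rw [← WithZero.log_le_log ((Valuation.ne_zero_iff _).2 (by simpa using hr)) one_ne_zero] at h
  simpa [ord] using h

lemma ord_algebraMap_pos {r : R} (hr0 : r ≠ 0) (hr : r ∈ v.asIdeal) :
    0 < v.ord (algebraMap R K r) := by
  have h := (v.valuation_lt_one_iff_mem (K := K) r).2 hr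
  rw [← WithZero.log_lt_log ((Valuation.ne_zero_iff _).2 (by simpa using hr0)) one_ne_zero] at h
  simpa [ord] using h

lemma ord_algebraMap_eq_zero {r : R} (hr : r ∉ v.asIdeal) : v.ord (algebraMap R K r) = 0 := by
  simp [ord, (v.valuation_eq_one_iff_notMem).2 hr]

lemma abs_ord_sub_ord_eq_ord_mul {r s : R} (hrs : r * s ≠ 0)
    (hcop : ¬(r ∈ v.asIdeal ∧ s ∈ v.asIdeal)) :
    |v.ord (algebraMap R K s) - v.ord (algebraMap R K r)| = v.ord (algebraMap R K (r * s)) := by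
  have hr : algebraMap R K r ≠ 0 := by simpa using left_ne_zero_of_mul hrs
  have hs : algebraMap R K s ≠ 0 := by simpa using right_ne_zero_of_mul hrs
  rw [map_mul, v.ord_mul hr hs]
  rcases not_and_or.mp hcop with h | h <;> rw [v.ord_algebraMap_eq_zero h] <;>
    simp [abs_of_nonneg (v.ord_algebraMap_nonneg _)]

lemma ord_nonneg_of_isIntegral {x : K} (hx : IsIntegral R x) : 0 ≤ v.ord x := by
  obtain ⟨r, rfl⟩ := IsIntegrallyClosed.isIntegral_iff.mp hx
  exact v.ord_algebraMap_nonneg r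

lemma ord_mem_Icc_of_mul_eq {x y z : K} (hx : IsIntegral R x) (hy : IsIntegral R y)
    (hz : z ≠ 0) (hxy : x * y = z) : v.ord x ∈ Set.Icc 0 (v.ord z) := by
  have hx0 : x ≠ 0 := left_ne_zero_of_mul (hxy ▸ hz)
  have hy0 : y ≠ 0 := right_ne_zero_of_mul (hxy ▸ hz)
  have := v.ord_nonneg_of_isIntegral hy
  rw [← hxy, v.ord_mul hx0 hy0]
  exact ⟨v.ord_nonneg_of_isIntegral hx, by omega⟩

lemma ord_map_eq_add_sum_of_exchanges {ι : Type*} [Fintype ι] {G : Type*} [FunLike G K K]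
    [RingHomClass G K K] {x y : ι → K} {Q : K} (hx : ∀ j, x j ≠ 0) (hQ0 : Q ≠ 0) {θ : G}
    (hQ : θ Q = Q) {T : Finset ι} (hθ : Exchanges x y θ T) (B : ℤ) (d : ι → ℤ) :
    v.ord (θ (Q ^ B * ∏ j, x j ^ d j)) =
      v.ord (Q ^ B * ∏ j, x j ^ d j) + ∑ j ∈ T, d j * (v.ord (y j) - v.ord (x j)) := by
  simp only [map_mul, map_zpow₀, map_prod, hQ]
  rw [v.ord_zpow_mul_prod_zpow hQ0 B (fun j => (map_ne_zero θ).2 (hx j)),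
    v.ord_zpow_mul_prod_zpow hQ0 B hx, add_assoc, add_right_inj, ← sub_eq_iff_eq_add',
    ← Finset.sum_sub_distrib]
  refine (Finset.sum_subset (Finset.subset_univ T) fun j _ hj => ?_).symm.trans
    (Finset.sum_congr rfl fun j hj => ?_)
  · rw [((hθ j).2 hj).1, sub_self]
  · rw [((hθ j).1 hj).1, mul_sub]

end IsDedekindDomain.HeightOneSpectrum

namespace NumberField

variable {K : Type*} [Field K] [NumberField K]

lemma exists_natCast_mem_asIdeal {p : ℕ} (hp : p.Prime) :
    ∃ v : HeightOneSpectrum (𝓞 K), (p : 𝓞 K) ∈ v.asIdeal := by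
  have : (Ideal.span {(p : ℤ)}).IsPrime :=
    (Ideal.span_singleton_prime (by exact_mod_cast hp.ne_zero)).2 (Nat.prime_iff_prime_int.1 hp)
  have hp0 : Ideal.span {(p : ℤ)} ≠ ⊥ := by simpa using hp.ne_zero
  obtain ⟨⟨P, hP⟩⟩ := (Ideal.span {(p : ℤ)}).nonempty_primesOver (S := 𝓞 K)
  refine ⟨⟨P, hP.1, Ideal.ne_bot_of_mem_primesOver hp0 hP⟩, ?_⟩
  have := hP.2
  simpa using (Ideal.mem_of_liesOver P (Ideal.span {(p : ℤ)}) (p : ℤ)).1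
    (Ideal.mem_span_singleton_self _)

theorem sum_abs_le_one_of_exchanges {ι : Type*} [Fintype ι] (v : HeightOneSpectrum (𝓞 K))
    {x y : ι → 𝓞 K} {q : ℕ} (hq0 : q ≠ 0) (hqv : (q : 𝓞 K) ∈ v.asIdeal)
    (hxy : ∀ j, x j * y j = q) (hcop : ∀ j, ¬(x j ∈ v.asIdeal ∧ y j ∈ v.asIdeal))
    (hexch : ∀ T : Finset ι, ∃ θ : K ≃ₐ[ℚ] K,
      Exchanges (fun j => algebraMap (𝓞 K) K (x j)) (fun j => algebraMap (𝓞 K) K (y j)) θ T)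
    {α α' : K} (hα : IsIntegral ℤ α) (hα' : IsIntegral ℤ α') (hαα' : α * α' = q)
    {B : ℤ} {d : ι → ℤ} (hαd : α = (q : K) ^ B * ∏ j, algebraMap (𝓞 K) K (x j) ^ d j) :
    ∑ j, |d j| ≤ 1 := by
  have hqK : (q : K) ≠ 0 := Nat.cast_ne_zero.2 hq0
  have hqR : (q : 𝓞 K) ≠ 0 := Nat.cast_ne_zero.2 hq0
  have hx : ∀ j, algebraMap (𝓞 K) K (x j) ≠ 0 := fun j => by
    simpa using left_ne_zero_of_mul (hxy j ▸ hqR)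
  have hN : 0 < v.ord (q : K) := by
    simpa using v.ord_algebraMap_pos (K := K) hqR hqv
  have he : ∀ j, |v.ord (algebraMap (𝓞 K) K (y j)) - v.ord (algebraMap (𝓞 K) K (x j))| =
      v.ord (q : K) := fun j => by
    rw [v.abs_ord_sub_ord_eq_ord_mul (hxy j ▸ hqR) (hcop j), hxy j, map_natCast]
  have hbound : ∀ T : Finset ι, v.ord α + ∑ j ∈ T, d j *
      (v.ord (algebraMap (𝓞 K) K (y j)) - v.ord (algebraMap (𝓞 K) K (x j))) ∈
        Set.Icc 0 (v.ord (q : K)) := fun T => by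
    obtain ⟨θ, hθ⟩ := hexch T
    rw [hαd, ← v.ord_map_eq_add_sum_of_exchanges hx hqK (map_natCast θ q) hθ, ← hαd]
    exact v.ord_mem_Icc_of_mul_eq (map_isIntegral_int θ hα).tower_top
      (map_isIntegral_int θ hα').tower_top hqK (by rw [← map_mul, hαα', map_natCast])
  have h := sum_abs_le_of_forall_add_sum_mem_Icc hbound
  simp only [abs_mul, he, ← Finset.sum_mul] at h
  exact le_of_mul_le_mul_right (by simpa using h) hN

end NumberField

theorem weil_numbers_in_group_are_conjugates_general
    (p k g : ℕ) (hp : p.Prime) (hk : 1 ≤ k)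
    (K : Type*) [Field K] [NumberField K]
    (π π' : Fin g → RingOfIntegers K)
    (hfac : ∀ i, π i * π' i = (p ^ k : RingOfIntegers K))
    (hweil : ∀ i, ∀ σ : K →+* ℂ,
      ‖σ (algebraMap (RingOfIntegers K) K (π i))‖ = Real.sqrt ((p : ℝ) ^ k))
    -- (1) coprimality of each pair
    (hcop : ∀ i, ∀ v : HeightOneSpectrum (RingOfIntegers K),
      ¬(π i ∈ v.asIdeal ∧ π' i ∈ v.asIdeal))
    -- complex conjugation on K, exchanging π_i and π'_i
    (c : K ≃ₐ[ℚ] K)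
    (hc : ∀ i, c (algebraMap (RingOfIntegers K) K (π i)) = algebraMap (RingOfIntegers K) K (π' i))
    (ι : K →+* ℂ) (hι : ∀ x, ι (c x) = starRingEnd ℂ (ι x))
    -- (2) the Galois elements σ_i
    (hσ : ∀ i, ∃ σ : K ≃ₐ[ℚ] K,
      σ (algebraMap (RingOfIntegers K) K (π i)) = algebraMap (RingOfIntegers K) K (π i) ∧
      ∀ j, j ≠ i → σ (algebraMap (RingOfIntegers K) K (π j)) = algebraMap (RingOfIntegers K) K (π' j))
    -- α is a q-Weil number in the group generated by the conjugates of π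
    (α : K)
    (hαmem : ∃ a b : Fin g → ℤ,
      α = (∏ i, (algebraMap (RingOfIntegers K) K (π i)) ^ (a i)) *
          ∏ i, (algebraMap (RingOfIntegers K) K (π' i)) ^ (b i))
    (hαint : IsIntegral ℤ α)
    (hαweil : ∀ σ : K →+* ℂ, ‖σ α‖ = Real.sqrt ((p : ℝ) ^ k)) :
    ∃ i, α = algebraMap (RingOfIntegers K) K (π i) ∨
         α = algebraMap (RingOfIntegers K) K (π' i) := by
  have hq0 : p ^ k ≠ 0 := pow_ne_zero k hp.ne_zero
  have hqK : ((p ^ k : ℕ) : K) ≠ 0 := Nat.cast_ne_zero.2 hq0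
  have hfac' : ∀ j, π j * π' j = ((p ^ k : ℕ) : 𝓞 K) := by exact_mod_cast hfac
  have hxy : ∀ j, algebraMap (𝓞 K) K (π j) * algebraMap (𝓞 K) K (π' j) = ((p ^ k : ℕ) : K) :=
    fun j => by rw [← map_mul, hfac', map_natCast]
  obtain ⟨a, b, hαab⟩ := hαmem
  rw [prod_zpow_mul_prod_zpow_eq hxy hqK] at hαab
  have hs : 1 < √((p : ℝ) ^ k) := Real.lt_sqrt_of_sq_lt (by
    simpa using one_lt_pow₀ (Nat.one_lt_cast.2 hp.one_lt) (by omega : k ≠ 0))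
  have hsum := sum_add_two_mul_eq_one_of_norm_eq ι hs (fun j => hweil j ι)
    (by simp [Real.sq_sqrt (by positivity : (0 : ℝ) ≤ (p : ℝ) ^ k)]) (hαab ▸ hαweil ι)
  have hαc : α * c α = ((p ^ k : ℕ) : K) := mul_map_eq_of_map_eq_norm_sq ι hι
    (by simp [hαweil ι, Real.sq_sqrt (by positivity : (0 : ℝ) ≤ (p : ℝ) ^ k)])
  obtain ⟨v, hv⟩ := exists_natCast_mem_asIdeal (K := K) hp
  have habs := sum_abs_le_one_of_exchanges v hq0
    (by rw [Nat.cast_pow]; exact Ideal.pow_mem_of_mem _ hv k hk) hfac' (fun j => hcop j v)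
    (exists_exchanges hxy hqK (fun θ => map_natCast θ _) hc hσ)
    hαint (map_isIntegral_int c hαint) hαc hαab
  obtain ⟨i, hzero, hi⟩ := exists_eq_single_of_sum_abs_le_one habs hsum
  refine ⟨i, ?_⟩
  rw [hαab, Finset.prod_eq_single i (fun j _ hj => by rw [hzero j hj, zpow_zero]) (by simp)]
  rcases hi with ⟨hd, hB⟩ | ⟨hd, hB⟩
  · left
    rw [hd, hB, zpow_zero, zpow_one, one_mul]
  · right
    rw [hd, hB, zpow_one, zpow_neg_one, ← hxy i, ← div_eq_mul_inv,
      mul_div_cancel_left₀ _ (left_ne_zero_of_mul (hxy i ▸ hqK))]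

/-- Proposition 2: let `π` be a `q`-Weil number (`q = p^k`) with conjugates
`(π_i, q/π_i = π'_i)`, `1 ≤ i ≤ g`.  Assume (1) each pair `π_i, π'_i` is coprime
in the Galois closure `K` and (2) for each `i` there is a Galois element fixing
`π_i` and sending `π_j` to `π'_j` for `j ≠ i`.  Then every `q`-Weil number
lying in the multiplicative group generated by the `π_i, π'_i` is one of the
conjugates `π_i` or `π'_i`. -/
theorem weil_numbers_in_group_are_conjugates
    (p k g : ℕ) (hp : p.Prime) (hk : 1 ≤ k) (hg : 1 ≤ g)
    (K : Type*) [Field K] [NumberField K]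
    (π π' : Fin g → RingOfIntegers K)
    (hfac : ∀ i, π i * π' i = (p ^ k : RingOfIntegers K))
    (hweil : ∀ i, ∀ σ : K →+* ℂ,
      ‖σ (algebraMap (RingOfIntegers K) K (π i))‖ = Real.sqrt ((p : ℝ) ^ k))
    -- (1) coprimality of each pair
    (hcop : ∀ i, ∀ v : HeightOneSpectrum (RingOfIntegers K),
      ¬(π i ∈ v.asIdeal ∧ π' i ∈ v.asIdeal))
    -- complex conjugation on K, exchanging π_i and π'_i
    (c : K ≃ₐ[ℚ] K)
    (hc : ∀ i, c (algebraMap (RingOfIntegers K) K (π i)) = algebraMap (RingOfIntegers K) K (π' i))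
    (ι : K →+* ℂ) (hι : ∀ x, ι (c x) = starRingEnd ℂ (ι x))
    -- (2) the Galois elements σ_i
    (hσ : ∀ i, ∃ σ : K ≃ₐ[ℚ] K,
      σ (algebraMap (RingOfIntegers K) K (π i)) = algebraMap (RingOfIntegers K) K (π i) ∧
      ∀ j, j ≠ i → σ (algebraMap (RingOfIntegers K) K (π j)) = algebraMap (RingOfIntegers K) K (π' j))
    -- α is a q-Weil number in the group generated by the conjugates of π
    (α : K)
    (hαmem : ∃ a b : Fin g → ℤ,
      α = (∏ i, (algebraMap (RingOfIntegers K) K (π i)) ^ (a i)) *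
          ∏ i, (algebraMap (RingOfIntegers K) K (π' i)) ^ (b i))
    (hαint : IsIntegral ℤ α)
    (hαweil : ∀ σ : K →+* ℂ, ‖σ α‖ = Real.sqrt ((p : ℝ) ^ k)) :
    ∃ i, α = algebraMap (RingOfIntegers K) K (π i) ∨
         α = algebraMap (RingOfIntegers K) K (π' i) :=
  weil_numbers_in_group_are_conjugates_general p k g hp hk K π π' hfac hweil hcop c hc ι hι hσ α
    hαmem hαint hαweil
end

section
/- Let K be a number field, 𝔭 a prime ideal of K, q ∈ ℤ with 𝔭 dividing q, and let π_1, …, π_g ∈ O_K be such that q = π_i · π_i' for each i, where 𝔭 divides both π_k and π_k' for some fixed index k. Then 𝔭 divides the sum b = Σ_{I,J ⊆ {1,…,g}, |I|+|J|=g} (∏_{i∈I} π_i)(∏_{j∈J} π_j'). Consequently, if b is a rational integer, then the rational prime p under 𝔭 divides b. -/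
open NumberField

/-- Key computation of Lemma (lm-ord): if `q = π_i · π'_i` for all `i` and the
prime ideal `𝔭` divides both `π_k` and `π'_k` for some `k`, then `𝔭` divides
`b = Σ_{|I|+|J|=g} (∏_{i∈I} π_i)(∏_{j∈J} π'_j)`; consequently, if `b` is a
rational integer, the rational prime `p` under `𝔭` divides it. -/
theorem prime_divides_middle_coefficient (K : Type*) [Field K] [NumberField K] (g : ℕ)
    (𝔭 : Ideal (RingOfIntegers K)) (h𝔭 : 𝔭.IsPrime)
    (q : ℤ) (π π' : Fin g → RingOfIntegers K)
    (hfac : ∀ i, (q : RingOfIntegers K) = π i * π' i)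
    (hq𝔭 : (q : RingOfIntegers K) ∈ 𝔭)
    (k : Fin g) (hk : π k ∈ 𝔭) (hk' : π' k ∈ 𝔭)
    (b : RingOfIntegers K)
    (hb : b = ∑ I : Finset (Fin g), ∑ J : Finset (Fin g),
      if I.card + J.card = g then (∏ i ∈ I, π i) * ∏ j ∈ J, π' j else 0)
    (p : ℕ) (hp : p.Prime) (hpmem : (p : RingOfIntegers K) ∈ 𝔭) :
    b ∈ 𝔭 ∧ ∀ bz : ℤ, (bz : RingOfIntegers K) = b → (p : ℤ) ∣ bz := by
  have hmem : b ∈ 𝔭 := by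
    rw [hb]
    refine Ideal.sum_mem _ fun I _ => Ideal.sum_mem _ fun J _ => ?_
    split_ifs with hcard
    · by_cases hkI : k ∈ I
      · exact Ideal.mul_mem_right _ _
          (Ideal.mem_of_dvd _ (Finset.dvd_prod_of_mem π hkI) hk)
      · by_cases hkJ : k ∈ J
        · exact Ideal.mul_mem_left _ _
            (Ideal.mem_of_dvd _ (Finset.dvd_prod_of_mem π' hkJ) hk')
        · have hinter : (I ∩ J).Nonempty := by
            by_contra h
            rw [Finset.not_nonempty_iff_eq_empty] at h
            have hcardU : (I ∪ J).card = g := by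
              rw [Finset.card_union_of_disjoint
                (Finset.disjoint_iff_inter_eq_empty.mpr h), hcard]
            have hsub : I ∪ J ⊆ Finset.univ.erase k := by
              intro x hx
              refine Finset.mem_erase.mpr ⟨?_, Finset.mem_univ _⟩
              rintro rfl
              rcases Finset.mem_union.mp hx with h' | h'
              exacts [hkI h', hkJ h']
            have hle := Finset.card_le_card hsub
            rw [hcardU, Finset.card_erase_of_mem (Finset.mem_univ _),
              Finset.card_univ, Fintype.card_fin] at hle
            have hg := k.isLt
            omega
          obtain ⟨i, hi⟩ := hinter
          rw [Finset.mem_inter] at hi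
          have hdvd : (q : RingOfIntegers K) ∣ (∏ i ∈ I, π i) * ∏ j ∈ J, π' j := by
            rw [hfac i]
            exact mul_dvd_mul (Finset.dvd_prod_of_mem π hi.1)
              (Finset.dvd_prod_of_mem π' hi.2)
          exact Ideal.mem_of_dvd _ hdvd hq𝔭
    · exact Ideal.zero_mem _
  refine ⟨hmem, fun bz hbz => ?_⟩
  haveI := h𝔭
  set P := Ideal.comap (algebraMap ℤ (RingOfIntegers K)) 𝔭 with hP
  haveI hPprime : P.IsPrime := Ideal.IsPrime.comap _
  have hpP : (p : ℤ) ∈ P := by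
    rw [Ideal.mem_comap]
    simpa using hpmem
  have hmax : (Ideal.span {(p : ℤ)}).IsMaximal :=
    PrincipalIdealRing.isMaximal_of_irreducible (Nat.prime_iff_prime_int.mp hp).irreducible
  have hle : Ideal.span {(p : ℤ)} ≤ P := by
    rwa [Ideal.span_singleton_le_iff_mem]
  have heq : Ideal.span {(p : ℤ)} = P := hmax.eq_of_le hPprime.ne_top hle
  have hbzP : bz ∈ P := by
    rw [Ideal.mem_comap]
    simpa [hbz] using hmem
  rw [← heq, Ideal.mem_span_singleton] at hbzP
  exact hbzP
end

section
/- Let g ≥ 1, and for 1 ≤ i ≤ g let X_i ≥ 1 be real numbers; let R = {x ∈ ℤ^g : |x_i| ≤ X_i for all i}. Let y ≥ 2 and for each prime p ≤ y let Ω(p) ⊆ (ℤ/pℤ)^g with |Ω(p)| = ω(p). Set P(y) = Σ_{p ≤ y} ω(p) p^{−g}, and for a ∈ ℤ^g let P(a,y) = #{p ≤ y : a mod p ∈ Ω(p)}. Then Σ_{a ∈ R} (P(a,y) − P(y))^2 ≤ C_g · P(y) · ∏_{i=1}^g (X_i + y^2), where C_g is a constant depending only on g. -/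
/-!
Expanding the indicator of `Ω(p)` in the additive characters of `(ℤ/pℤ)^g` writes
`P(a,y) - P(y)` as an exponential sum `∑ₛ bₛ e(⟨a, θₛ⟩)` over the Farey points `θ = h/p`
(`p ≤ y` prime, `h ≠ 0`), with `∑ |bₛ|² ≤ P(y)` by Parseval. Distinct Farey points differ by at
least `1/pq ≥ 1/M`, `M = ⌈y²⌉`, in some coordinate, measured by the distance to the nearest
integer `‖(t : UnitAddCircle)‖`.

For such `1/M`-spaced points the large sieve is proved by majorising the sum over the box
`|aᵢ| ≤ Lᵢ` by the sum over all differences `j - k` of points of the box `[0, 3Lᵢ)`. This turns it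
into a quadratic form in `b` whose kernel is `∏ᵢ |D_{3Lᵢ}(θₛ,ᵢ - θₜ,ᵢ)|²`, `D_N` the Dirichlet
kernel. Its row sums are bounded by sorting the points into the `M^g` cells of side `1/M`: each
cell holds at most one point, and on the cell at distance `k/M` from the integers
`|D_N|² ≤ min(N², M²/4k²)`. With `Lᵢ = ⌈Xᵢ⌉ + M` the bound is `∏ᵢ 19 Lᵢ ≤ ∏ᵢ 38 (Xᵢ + y²)`.
-/

open Finset Complex Real ComplexConjugate

theorem AddChar.map_sum_eq_prod {A M ι : Type*} [AddCommMonoid A] [CommMonoid M]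
    (ψ : AddChar A M) (s : Finset ι) (f : ι → A) : ψ (∑ i ∈ s, f i) = ∏ i ∈ s, ψ (f i) := by
  classical
  induction s using Finset.induction_on with
  | empty => simp
  | insert i s hi ih => rw [sum_insert hi, prod_insert hi, AddChar.map_add_eq_mul, ih]

namespace LargeSieve

noncomputable def e : AddChar ℝ ℂ where
  toFun x := exp (↑(2 * π * x) * I)
  map_zero_eq_one' := by simp
  map_add_eq_mul' x y := by rw [← Complex.exp_add]; push_cast; ring_nf

lemma e_apply (x : ℝ) : e x = exp (↑(2 * π * x) * I) := rfl

@[simp] lemma norm_e (x : ℝ) : ‖e x‖ = 1 := norm_exp_ofReal_mul_I _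

lemma e_neg (x : ℝ) : e (-x) = conj (e x) := by
  rw [AddChar.map_neg_eq_inv, inv_eq_conj (norm_e x)]

lemma e_intCast (n : ℤ) : e n = 1 := by
  rw [e_apply, ← exp_int_mul_two_pi_mul_I n]; push_cast; ring_nf

lemma e_natCast_mul (n : ℕ) (x : ℝ) : e (n * x) = e x ^ n := by
  rw [← nsmul_eq_mul, AddChar.map_nsmul_eq_pow]

lemma four_mul_norm_le_norm_e_sub_one (t : ℝ) : 4 * ‖(t : UnitAddCircle)‖ ≤ ‖e t - 1‖ := by
  set d := t - round t with hd_def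
  have he : e t = e d := by
    rw [show t = d + round t by ring, AddChar.map_add_eq_mul, e_intCast, mul_one]
  have hsin : 2 / π * |π * d| ≤ |Real.sin (π * d)| := Real.mul_abs_le_abs_sin <| by
    rw [abs_mul, abs_of_pos pi_pos]; nlinarith [abs_sub_round t, pi_pos]
  have hd : 2 / π * |π * d| = 2 * |d| := by rw [abs_mul, abs_of_pos pi_pos]; field_simp
  rw [UnitAddCircle.norm_eq, ← hd_def, he, e_apply, mul_comm _ I, norm_exp_I_mul_ofReal_sub_one,
    show 2 * π * d / 2 = π * d by ring, norm_mul, Real.norm_eq_abs, Real.norm_eq_abs]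
  norm_num
  linarith

noncomputable def dirichletKernel (N : ℕ) (u : ℝ) : ℂ := ∑ n ∈ range N, e (n * u)

lemma norm_dirichletKernel_le (N : ℕ) (u : ℝ) : ‖dirichletKernel N u‖ ≤ N :=
  (norm_sum_le _ _).trans (by simp)

lemma norm_dirichletKernel_le_inv {u : ℝ} (hu : 0 < ‖(u : UnitAddCircle)‖) (N : ℕ) :
    ‖dirichletKernel N u‖ ≤ 1 / (2 * ‖(u : UnitAddCircle)‖) := by
  have hden : 4 * ‖(u : UnitAddCircle)‖ ≤ ‖e u - 1‖ := four_mul_norm_le_norm_e_sub_one u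
  have hne : e u ≠ 1 := fun h => by simp [h] at hden; linarith
  have hnum : ‖e u ^ N - 1‖ ≤ 2 := (norm_sub_le _ _).trans (by simp; norm_num)
  simp only [dirichletKernel, e_natCast_mul, geom_sum_eq hne, norm_div]
  rw [div_le_div_iff₀ (by linarith) (by positivity)]
  nlinarith

noncomputable def dirichletMajorant (N M j : ℕ) : ℝ := if j = 0 then N ^ 2 else M ^ 2 / (4 * j ^ 2)

lemma dirichletMajorant_nonneg (N M j : ℕ) : 0 ≤ dirichletMajorant N M j := by
  unfold dirichletMajorant; split_ifs <;> positivity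

lemma sq_norm_dirichletKernel_le_majorant {N M j : ℕ} {u : ℝ} (hM : 0 < M)
    (hj : (j : ℝ) / M ≤ ‖(u : UnitAddCircle)‖) :
    ‖dirichletKernel N u‖ ^ 2 ≤ dirichletMajorant N M j := by
  unfold dirichletMajorant
  split_ifs with h0
  · exact pow_le_pow_left₀ (norm_nonneg _) (norm_dirichletKernel_le N u) 2
  · have hj0 : (0 : ℝ) < j / M := by positivity
    have hu := hj0.trans_le hj
    calc ‖dirichletKernel N u‖ ^ 2 ≤ (1 / (2 * ‖(u : UnitAddCircle)‖)) ^ 2 :=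
          pow_le_pow_left₀ (norm_nonneg _) (norm_dirichletKernel_le_inv hu N) 2
      _ ≤ (1 / (2 * (j / M))) ^ 2 := by gcongr
      _ = M ^ 2 / (4 * j ^ 2) := by field_simp; ring

noncomputable def bucket (M : ℕ) (u : ℝ) : ℕ := ⌊Int.fract u * M⌋₊

lemma bucket_lt {M : ℕ} (hM : 0 < M) (u : ℝ) : bucket M u < M := by
  rw [bucket, Nat.floor_lt (by have := Int.fract_nonneg u; positivity)]
  nlinarith [Int.fract_lt_one u, (Nat.cast_pos.2 hM : (0 : ℝ) < M)]

lemma bucket_le_fract_mul (M : ℕ) (u : ℝ) : (bucket M u : ℝ) ≤ Int.fract u * M :=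
  Nat.floor_le (by have := Int.fract_nonneg u; positivity)

lemma fract_mul_lt_bucket_add_one (M : ℕ) (u : ℝ) : Int.fract u * M < bucket M u + 1 :=
  Nat.lt_floor_add_one _

lemma norm_sub_lt_of_bucket_eq {M : ℕ} (hM : 0 < M) {u v : ℝ} (h : bucket M u = bucket M v) :
    ‖((u - v : ℝ) : UnitAddCircle)‖ < 1 / M := by
  have hM' : (0 : ℝ) < M := Nat.cast_pos.2 hM
  have hu := bucket_le_fract_mul M u
  have hu' := fract_mul_lt_bucket_add_one M u
  have hv := bucket_le_fract_mul M v
  have hv' := fract_mul_lt_bucket_add_one M v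
  rw [h] at hu hu'
  rw [UnitAddCircle.norm_eq, lt_div_iff₀ hM']
  calc |u - v - round (u - v)| * M ≤ |u - v - ((⌊u⌋ - ⌊v⌋ : ℤ) : ℝ)| * M :=
        mul_le_mul_of_nonneg_right (round_le _ _) hM'.le
    _ = |Int.fract u * M - Int.fract v * M| := by
        rw [← abs_of_pos hM', ← abs_mul, abs_of_pos hM']; congr 1; push_cast [Int.fract]; ring
    _ < 1 := abs_sub_lt_iff.2 ⟨by linarith, by linarith⟩

lemma bucket_div_le_norm_or {M : ℕ} (hM : 0 < M) (u : ℝ) :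
    (bucket M u : ℝ) / M ≤ ‖(u : UnitAddCircle)‖ ∨
      ((M - 1 - bucket M u : ℕ) : ℝ) / M ≤ ‖(u : UnitAddCircle)‖ := by
  have hM' : (0 : ℝ) < M := Nat.cast_pos.2 hM
  have hk := bucket_le_fract_mul M u
  have hk' := fract_mul_lt_bucket_add_one M u
  have hcast : ((M - 1 - bucket M u : ℕ) : ℝ) = M - 1 - bucket M u := by
    have := bucket_lt hM u; push_cast [Nat.sub_sub, Nat.cast_sub (by omega : 1 + bucket M u ≤ M)]
    ring
  rw [UnitAddCircle.norm_eq, abs_sub_round_eq_min, div_le_iff₀ hM', div_le_iff₀ hM', hcast]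
  rcases min_choice (Int.fract u) (1 - Int.fract u) with h | h <;> rw [h]
  · exact Or.inl hk
  · right; linarith

lemma sq_norm_dirichletKernel_le_bucket (N : ℕ) {M : ℕ} (hM : 0 < M) (u : ℝ) :
    ‖dirichletKernel N u‖ ^ 2 ≤
      dirichletMajorant N M (bucket M u) + dirichletMajorant N M (M - 1 - bucket M u) := by
  rcases bucket_div_le_norm_or hM u with h | h
  · linarith [sq_norm_dirichletKernel_le_majorant (N := N) hM h,
      dirichletMajorant_nonneg N M (M - 1 - bucket M u)]
  · linarith [sq_norm_dirichletKernel_le_majorant (N := N) hM h,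
      dirichletMajorant_nonneg N M (bucket M u)]

lemma sum_dirichletMajorant_le (N : ℕ) {M : ℕ} (hM : 0 < M) :
    ∑ k ∈ range M, (dirichletMajorant N M k + dirichletMajorant N M (M - 1 - k)) ≤
      2 * N ^ 2 + M ^ 2 := by
  rw [sum_add_distrib, sum_range_reflect (fun k => dirichletMajorant N M k) M, ← two_mul,
    range_eq_Ico, sum_eq_sum_Ico_succ_bot hM, Finset.Ico_add_one_left_eq_Ioo]
  have htail : ∑ k ∈ Ioo 0 M, dirichletMajorant N M k =
      M ^ 2 / 4 * ∑ k ∈ Ioo 0 M, ((k : ℝ) ^ 2)⁻¹ := by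
    rw [mul_sum]
    refine sum_congr rfl fun k hk => ?_
    rw [dirichletMajorant, if_neg (mem_Ioo.1 hk).1.ne']
    field_simp
  have := sum_Ioo_inv_sq_le (α := ℝ) 0 M
  rw [htail, dirichletMajorant, if_pos rfl]
  norm_num at this
  nlinarith [sq_nonneg (M : ℝ)]

lemma sum_prod_le_prod_sum_of_injOn {ι κ α : Type*} [Fintype κ] [DecidableEq κ] [DecidableEq α]
    (K : Finset ι) (S : κ → Finset α) (key : ι → κ → α) (hkey : ∀ t ∈ K, ∀ i, key t i ∈ S i)
    (hinj : Set.InjOn key K) (f : ι → κ → ℝ) (φ : κ → α → ℝ)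
    (hf : ∀ t ∈ K, ∀ i, 0 ≤ f t i ∧ f t i ≤ φ i (key t i)) (hφ : ∀ i, ∀ a ∈ S i, 0 ≤ φ i a) :
    ∑ t ∈ K, ∏ i, f t i ≤ ∏ i, ∑ a ∈ S i, φ i a := by
  calc ∑ t ∈ K, ∏ i, f t i ≤ ∑ t ∈ K, ∏ i, φ i (key t i) :=
        sum_le_sum fun t ht => prod_le_prod (fun i _ => (hf t ht i).1) fun i _ => (hf t ht i).2
    _ = ∑ x ∈ K.image key, ∏ i, φ i (x i) := (sum_image (f := fun x => ∏ i, φ i (x i)) hinj).symm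
    _ ≤ ∑ x ∈ Fintype.piFinset S, ∏ i, φ i (x i) := by
        refine sum_le_sum_of_subset_of_nonneg ?_ fun x hx _ => ?_
        · exact image_subset_iff.2 fun t ht => Fintype.mem_piFinset.2 (hkey t ht)
        · exact prod_nonneg fun i _ => hφ i _ (Fintype.mem_piFinset.1 hx i)
    _ = ∏ i, ∑ a ∈ S i, φ i a := (prod_univ_sum S φ).symm

lemma sum_prod_sq_norm_dirichletKernel_le {ι κ : Type*} [Fintype κ] (N : κ → ℕ) {M : ℕ}
    (hM : 0 < M) (K : Finset ι) (x : ι → κ → ℝ)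
    (hx : (K : Set ι).Pairwise fun s t => ∃ i, 1 / M ≤ ‖((x s i - x t i : ℝ) : UnitAddCircle)‖) :
    ∑ t ∈ K, ∏ i, ‖dirichletKernel (N i) (x t i)‖ ^ 2 ≤ ∏ i, (2 * (N i : ℝ) ^ 2 + M ^ 2) := by
  classical
  have hinj : Set.InjOn (fun t i => bucket M (x t i)) K := fun s hs t ht hst => by
    by_contra hne
    obtain ⟨i, hi⟩ := hx hs ht hne
    linarith [norm_sub_lt_of_bucket_eq hM (congrFun hst i)]
  calc ∑ t ∈ K, ∏ i, ‖dirichletKernel (N i) (x t i)‖ ^ 2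
      ≤ ∏ i, ∑ k ∈ range M,
          (dirichletMajorant (N i) M k + dirichletMajorant (N i) M (M - 1 - k)) := by
        refine sum_prod_le_prod_sum_of_injOn K _ _ (fun t _ i => mem_range.2 (bucket_lt hM _))
          hinj _ _ (fun t _ i => ⟨by positivity, sq_norm_dirichletKernel_le_bucket _ hM _⟩)
          fun i k _ => add_nonneg (dirichletMajorant_nonneg _ _ _) (dirichletMajorant_nonneg _ _ _)
    _ ≤ ∏ i, (2 * (N i : ℝ) ^ 2 + M ^ 2) :=
        prod_le_prod (fun i _ => sum_nonneg fun k _ =>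
            add_nonneg (dirichletMajorant_nonneg _ _ _) (dirichletMajorant_nonneg _ _ _))
          fun i _ => sum_dirichletMajorant_le _ hM

lemma sum_sum_mul_mul_le {ι : Type*} (K : Finset ι) (G : ι → ι → ℝ) (hG : ∀ s t, 0 ≤ G s t)
    {B : ℝ} (hrow : ∀ s ∈ K, ∑ t ∈ K, G s t ≤ B) (hcol : ∀ t ∈ K, ∑ s ∈ K, G s t ≤ B)
    (x : ι → ℝ) : ∑ s ∈ K, ∑ t ∈ K, x s * x t * G s t ≤ B * ∑ s ∈ K, x s ^ 2 := by
  have hsq : ∀ H : ι → ι → ℝ, (∀ s ∈ K, ∑ t ∈ K, H s t ≤ B) →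
      ∑ s ∈ K, ∑ t ∈ K, x s ^ 2 * H s t ≤ B * ∑ s ∈ K, x s ^ 2 := fun H hH => by
    simp only [← mul_sum]
    rw [mul_sum]
    exact sum_le_sum fun s hs => by
      rw [mul_comm B]; exact mul_le_mul_of_nonneg_left (hH s hs) (sq_nonneg _)
  have hrow' := hsq G hrow
  have hcol' := hsq (fun t s => G s t) hcol
  rw [sum_comm] at hcol'
  calc ∑ s ∈ K, ∑ t ∈ K, x s * x t * G s t
      ≤ ∑ s ∈ K, ∑ t ∈ K, (x s ^ 2 * G s t + x t ^ 2 * G s t) / 2 :=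
        sum_le_sum fun s _ => sum_le_sum fun t _ => by
          nlinarith [mul_nonneg (sq_nonneg (x s - x t)) (hG s t)]
    _ = (∑ s ∈ K, ∑ t ∈ K, x s ^ 2 * G s t + ∑ s ∈ K, ∑ t ∈ K, x t ^ 2 * G s t) / 2 := by
        simp only [← sum_div, ← sum_add_distrib]
    _ ≤ B * ∑ s ∈ K, x s ^ 2 := by linarith

lemma mul_sum_le_sum_sum_sub {κ : Type*} [Fintype κ] [DecidableEq κ] (L : κ → ℕ)
    (R : Finset (κ → ℤ)) (hR : ∀ a ∈ R, ∀ i, |a i| ≤ L i) (f : (κ → ℤ) → ℝ) (hf : ∀ a, 0 ≤ f a) :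
    (∏ i, (L i : ℝ)) * ∑ a ∈ R, f a ≤
      ∑ j ∈ Fintype.piFinset (fun i => Ico 0 (3 * L i : ℤ)),
        ∑ k ∈ Fintype.piFinset (fun i => Ico 0 (3 * L i : ℤ)), f (j - k) := by
  set shifts := Fintype.piFinset fun i => Ico (0 : ℤ) (L i)
  set box := Fintype.piFinset fun i => Ico (0 : ℤ) (3 * L i)
  have hcard : (#shifts : ℝ) = ∏ i, (L i : ℝ) := by simp [shifts]
  -- each `a ∈ R` is the difference `(m + L + a) - (m + L)` of two box points, for every shift `m`
  let pair : (κ → ℤ) × (κ → ℤ) → (κ → ℤ) × (κ → ℤ) := fun am =>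
    (am.2 + (fun i => (L i : ℤ)) + am.1, am.2 + fun i => (L i : ℤ))
  have hinj : Set.InjOn pair (R ×ˢ shifts : Finset _) := by
    rintro ⟨a, m⟩ - ⟨a', m'⟩ - h
    simp only [pair, Prod.mk.injEq] at h
    obtain rfl := add_right_cancel h.2
    simpa using h.1
  have hmaps : (R ×ˢ shifts).image pair ⊆ box ×ˢ box := by
    simp only [subset_iff, mem_image, mem_product, Prod.exists]
    rintro _ ⟨a, m, ⟨ha, hm⟩, rfl⟩
    simp only [shifts, box, pair, Fintype.mem_piFinset, mem_Ico, Pi.add_apply] at hm ⊢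
    refine ⟨fun i => ?_, fun i => ?_⟩ <;>
      have := abs_le.1 (hR a ha i) <;> have := hm i <;> constructor <;> linarith
  calc (∏ i, (L i : ℝ)) * ∑ a ∈ R, f a = ∑ am ∈ R ×ˢ shifts, f am.1 := by
        rw [sum_product, ← hcard, mul_sum]; simp [mul_comm]
    _ = ∑ jk ∈ (R ×ˢ shifts).image pair, f (jk.1 - jk.2) := by
        rw [sum_image hinj]; simp [pair]
    _ ≤ ∑ jk ∈ box ×ˢ box, f (jk.1 - jk.2) :=
        sum_le_sum_of_subset_of_nonneg hmaps fun _ _ _ => hf _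
    _ = _ := sum_product _ _ _

section ExpSum

variable {ι κ : Type*} [Fintype κ]

noncomputable def expSum (K : Finset ι) (b : ι → ℂ) (θ : ι → κ → ℝ) (a : κ → ℤ) : ℂ :=
  ∑ s ∈ K, b s * e (∑ i, a i * θ s i)

lemma e_mul_conj_e_sub (θ θ' : κ → ℝ) (j k : κ → ℤ) :
    e (∑ i, ((j - k) i : ℝ) * θ i) * conj (e (∑ i, ((j - k) i : ℝ) * θ' i)) =
      e (∑ i, (j i : ℝ) * (θ i - θ' i)) * conj (e (∑ i, (k i : ℝ) * (θ i - θ' i))) := by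
  rw [← e_neg, ← e_neg, ← AddChar.map_add_eq_mul, ← AddChar.map_add_eq_mul]
  congr 1
  simp only [← sum_neg_distrib, ← sum_add_distrib, Pi.sub_apply, Int.cast_sub]
  exact sum_congr rfl fun i _ => by ring

lemma sum_sum_sq_norm_expSum_sub_le (K : Finset ι) (b : ι → ℂ) (θ : ι → κ → ℝ)
    (B : Finset (κ → ℤ)) :
    ∑ j ∈ B, ∑ k ∈ B, ‖expSum K b θ (j - k)‖ ^ 2 ≤
      ∑ s ∈ K, ∑ t ∈ K, ‖b s‖ * ‖b t‖ * ‖∑ j ∈ B, e (∑ i, (j i : ℝ) * (θ s i - θ t i))‖ ^ 2 := by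
  set E := fun (s t : ι) (j : κ → ℤ) => e (∑ i, (j i : ℝ) * (θ s i - θ t i))
  have hP : ∀ s t,
      ((‖∑ j ∈ B, E s t j‖ ^ 2 : ℝ) : ℂ) = ∑ j ∈ B, ∑ k ∈ B, E s t j * conj (E s t k) :=
    fun s t => by push_cast; rw [← mul_conj', map_sum, sum_mul_sum]
  have hid : ((∑ j ∈ B, ∑ k ∈ B, ‖expSum K b θ (j - k)‖ ^ 2 : ℝ) : ℂ) =
      ∑ s ∈ K, ∑ t ∈ K, b s * conj (b t) * ((‖∑ j ∈ B, E s t j‖ ^ 2 : ℝ) : ℂ) := by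
    calc ((∑ j ∈ B, ∑ k ∈ B, ‖expSum K b θ (j - k)‖ ^ 2 : ℝ) : ℂ)
        = ∑ j ∈ B, ∑ k ∈ B, expSum K b θ (j - k) * conj (expSum K b θ (j - k)) := by
          push_cast; simp only [mul_conj']
      _ = ∑ jk ∈ B ×ˢ B, ∑ st ∈ K ×ˢ K,
            b st.1 * conj (b st.2) * (E st.1 st.2 jk.1 * conj (E st.1 st.2 jk.2)) := by
          simp only [sum_product, expSum, map_sum, map_mul, sum_mul_sum, E, ← e_mul_conj_e_sub]
          refine sum_congr rfl fun j _ => sum_congr rfl fun k _ => sum_congr rfl fun s _ =>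
            sum_congr rfl fun t _ => by ring
      _ = ∑ st ∈ K ×ˢ K, ∑ jk ∈ B ×ˢ B,
            b st.1 * conj (b st.2) * (E st.1 st.2 jk.1 * conj (E st.1 st.2 jk.2)) := sum_comm
      _ = ∑ s ∈ K, ∑ t ∈ K, b s * conj (b t) * ((‖∑ j ∈ B, E s t j‖ ^ 2 : ℝ) : ℂ) := by
          simp only [sum_product, hP, mul_sum]
  calc ∑ j ∈ B, ∑ k ∈ B, ‖expSum K b θ (j - k)‖ ^ 2
      = (∑ s ∈ K, ∑ t ∈ K, b s * conj (b t) * ((‖∑ j ∈ B, E s t j‖ ^ 2 : ℝ) : ℂ)).re := by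
        rw [← hid, ofReal_re]
    _ ≤ ‖∑ s ∈ K, ∑ t ∈ K, b s * conj (b t) * ((‖∑ j ∈ B, E s t j‖ ^ 2 : ℝ) : ℂ)‖ := re_le_norm _
    _ ≤ ∑ s ∈ K, ∑ t ∈ K, ‖b s * conj (b t) * ((‖∑ j ∈ B, E s t j‖ ^ 2 : ℝ) : ℂ)‖ :=
        (norm_sum_le _ _).trans (sum_le_sum fun s _ => norm_sum_le _ _)
    _ = _ := by simp [E]

lemma sum_piFinset_Ico_e_eq_prod (N : κ → ℕ) (Δ : κ → ℝ) [DecidableEq κ] :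
    ∑ j ∈ Fintype.piFinset (fun i => Ico 0 (N i : ℤ)), e (∑ i, (j i : ℝ) * Δ i) =
      ∏ i, dirichletKernel (N i) (Δ i) := by
  have hD : ∀ i, dirichletKernel (N i) (Δ i) = ∑ n ∈ Ico 0 (N i : ℤ), e (n * Δ i) := fun i => by
    simp [dirichletKernel, Int.Ico_eq_finset_map]
  simp only [hD, prod_univ_sum, AddChar.map_sum_eq_prod]

theorem large_sieve [DecidableEq κ] (K : Finset ι) (θ : ι → κ → ℝ) (b : ι → ℂ) {M : ℕ} (hM : 0 < M)
    (hθ : (K : Set ι).Pairwise fun s t => ∃ i, 1 / M ≤ ‖((θ s i - θ t i : ℝ) : UnitAddCircle)‖)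
    (L : κ → ℕ) (hML : ∀ i, M ≤ L i) (R : Finset (κ → ℤ)) (hR : ∀ a ∈ R, ∀ i, |a i| ≤ L i) :
    ∑ a ∈ R, ‖expSum K b θ a‖ ^ 2 ≤ (∏ i, 19 * (L i : ℝ)) * ∑ s ∈ K, ‖b s‖ ^ 2 := by
  set G := fun s t => ∏ i, ‖dirichletKernel (3 * L i) (θ s i - θ t i)‖ ^ 2
  set C := ∏ i, (2 * ((3 * L i : ℕ) : ℝ) ^ 2 + M ^ 2)
  have hrow : ∀ s ∈ K, ∑ t ∈ K, G s t ≤ C := fun s _ =>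
    sum_prod_sq_norm_dirichletKernel_le _ hM K _ fun t ht t' ht' hne => by
      obtain ⟨i, hi⟩ := hθ ht' ht (Ne.symm hne)
      exact ⟨i, by rwa [sub_sub_sub_cancel_left]⟩
  have hcol : ∀ t ∈ K, ∑ s ∈ K, G s t ≤ C := fun t _ =>
    sum_prod_sq_norm_dirichletKernel_le _ hM K _ fun s hs s' hs' hne => by
      obtain ⟨i, hi⟩ := hθ hs hs' hne
      exact ⟨i, by rwa [sub_sub_sub_cancel_right]⟩
  have hsieve : (∏ i, (L i : ℝ)) * ∑ a ∈ R, ‖expSum K b θ a‖ ^ 2 ≤ C * ∑ s ∈ K, ‖b s‖ ^ 2 :=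
    calc (∏ i, (L i : ℝ)) * ∑ a ∈ R, ‖expSum K b θ a‖ ^ 2
        ≤ ∑ j ∈ Fintype.piFinset (fun i => Ico 0 (3 * L i : ℤ)),
            ∑ k ∈ Fintype.piFinset (fun i => Ico 0 (3 * L i : ℤ)), ‖expSum K b θ (j - k)‖ ^ 2 :=
          mul_sum_le_sum_sum_sub L R hR _ fun _ => by positivity
      _ ≤ ∑ s ∈ K, ∑ t ∈ K, ‖b s‖ * ‖b t‖ * G s t := by
          refine (sum_sum_sq_norm_expSum_sub_le K b θ _).trans_eq ?_
          have := sum_piFinset_Ico_e_eq_prod (fun i => 3 * L i)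
          push_cast at this
          simp [G, this, norm_prod, prod_pow]
      _ ≤ C * ∑ s ∈ K, ‖b s‖ ^ 2 :=
          sum_sum_mul_mul_le K G (fun _ _ => by positivity) hrow hcol _
  have hC : C ≤ (∏ i, (L i : ℝ)) * ∏ i, 19 * (L i : ℝ) := by
    rw [← prod_mul_distrib]
    refine prod_le_prod (fun _ _ => by positivity) fun i _ => ?_
    have : (M : ℝ) ≤ L i := Nat.cast_le.2 (hML i)
    push_cast
    nlinarith [(Nat.cast_pos.2 hM : (0 : ℝ) < M)]
  have hL : 0 < ∏ i, (L i : ℝ) := prod_pos fun i _ => Nat.cast_pos.2 (hM.trans_le (hML i))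
  refine le_of_mul_le_mul_left ?_ hL
  calc _ ≤ C * ∑ s ∈ K, ‖b s‖ ^ 2 := hsieve
    _ ≤ _ := by rw [← mul_assoc]; exact mul_le_mul_of_nonneg_right hC (by positivity)

end ExpSum

section ZModFourier

open Matrix

variable {κ : Type*} {p : ℕ}

noncomputable def fareyPhase (h : κ → ZMod p) (i : κ) : ℝ := (h i).val / p

variable [Fintype κ]

-- Phrased through `e` rather than `ZMod.stdAddChar` (which needs `p ≠ 0`), so that it is
-- defined for every `p`; `charSum_eq` gives the character form.
noncomputable def charSum (Ω : Finset (κ → ZMod p)) (h : κ → ZMod p) : ℂ :=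
  ∑ w ∈ Ω, e (-∑ i, ((w i).val : ℝ) * fareyPhase h i)

variable [NeZero p]

lemma e_sum_mul_fareyPhase (x : κ → ℤ) (h : κ → ZMod p) :
    e (∑ i, (x i : ℝ) * fareyPhase h i) = ZMod.stdAddChar ((fun i => (x i : ZMod p)) ⬝ᵥ h) := by
  have hsum : ((fun i => (x i : ZMod p)) ⬝ᵥ h) = ((∑ i, x i * (h i).val : ℤ) : ZMod p) := by
    simp [dotProduct]
  rw [hsum, ZMod.stdAddChar_coe, e_apply]
  congr 1
  simp only [fareyPhase]
  push_cast
  rw [mul_sum, mul_sum, sum_div, sum_mul]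
  exact sum_congr rfl fun i _ => by ring

lemma charSum_eq (Ω : Finset (κ → ZMod p)) (h : κ → ZMod p) :
    charSum Ω h = ∑ w ∈ Ω, ZMod.stdAddChar (-(w ⬝ᵥ h)) := by
  refine sum_congr rfl fun w _ => ?_
  have := e_sum_mul_fareyPhase (fun i => ((w i).val : ℤ)) h
  simp only [Int.cast_natCast, ZMod.natCast_zmod_val] at this
  rw [AddChar.map_neg_eq_inv, this, AddChar.map_neg_eq_inv]

lemma sum_stdAddChar_dotProduct [DecidableEq κ] (v : κ → ZMod p) :
    ∑ h : κ → ZMod p, ZMod.stdAddChar (v ⬝ᵥ h) = if v = 0 then (p : ℂ) ^ Fintype.card κ else 0 := by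
  simp only [dotProduct, AddChar.map_sum_eq_prod]
  rw [← Fintype.prod_sum fun i x => ZMod.stdAddChar (v i * x)]
  simp only [mul_comm (v _), AddChar.sum_mulShift _ (ZMod.isPrimitive_stdAddChar p), ZMod.card,
    Nat.cast_ite, Nat.cast_zero, Fintype.prod_ite_zero, funext_iff, Pi.zero_apply, prod_const,
    card_univ]

lemma sum_charSum_mul_stdAddChar [DecidableEq κ] (Ω : Finset (κ → ZMod p)) (x : κ → ZMod p) :
    ∑ h, charSum Ω h * ZMod.stdAddChar (x ⬝ᵥ h) =
      if x ∈ Ω then (p : ℂ) ^ Fintype.card κ else 0 := by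
  simp only [charSum_eq, sum_mul, ← AddChar.map_add_eq_mul]
  rw [sum_comm]
  simp only [neg_add_eq_sub, ← sub_dotProduct, sum_stdAddChar_dotProduct, sub_eq_zero]
  rw [sum_ite_eq]

lemma indicator_sub_density_eq_sum [DecidableEq κ] (Ω : Finset (κ → ZMod p)) (x : κ → ZMod p) :
    (if x ∈ Ω then 1 else 0 : ℂ) - #Ω / (p : ℂ) ^ Fintype.card κ =
      ∑ h ∈ univ.erase 0, charSum Ω h / (p : ℂ) ^ Fintype.card κ * ZMod.stdAddChar (x ⬝ᵥ h) := by
  have hp : (p : ℂ) ^ Fintype.card κ ≠ 0 := pow_ne_zero _ (Nat.cast_ne_zero.2 (NeZero.ne p))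
  have h0 : charSum Ω 0 * ZMod.stdAddChar (x ⬝ᵥ 0) = #Ω := by simp [charSum_eq]
  have hsum := sum_charSum_mul_stdAddChar Ω x
  rw [← add_sum_erase _ _ (mem_univ 0), h0] at hsum
  simp only [div_mul_eq_mul_div, ← sum_div]
  rw [eq_div_iff hp, sub_mul, div_mul_cancel₀ _ hp]
  split_ifs at hsum ⊢ <;> linear_combination -hsum

lemma sum_sq_norm_charSum [DecidableEq κ] (Ω : Finset (κ → ZMod p)) :
    ∑ h, ‖charSum Ω h‖ ^ 2 = (p : ℝ) ^ Fintype.card κ * #Ω := by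
  have hconj : ∀ h, conj (charSum Ω h) = ∑ w ∈ Ω, ZMod.stdAddChar (w ⬝ᵥ h) := fun h => by
    simp [charSum_eq, AddChar.map_neg_eq_conj]
  have : ∑ h, ((‖charSum Ω h‖ ^ 2 : ℝ) : ℂ) = (p : ℂ) ^ Fintype.card κ * #Ω := by
    simp only [ofReal_pow, ← mul_conj', hconj, mul_sum]
    rw [sum_comm]
    simp only [sum_charSum_mul_stdAddChar]
    rw [sum_ite_of_true fun _ h => h, sum_const, nsmul_eq_mul, mul_comm]
  exact_mod_cast this

end ZModFourier

section FareyPoints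

-- `ZMod 0 = ℤ` is infinite, so `univ` only makes sense for `p ≠ 0`.
noncomputable def nonzeroFreqs (κ : Type*) [Fintype κ] [DecidableEq κ] (p : ℕ) :
    Finset (κ → ZMod p) :=
  if hp : p = 0 then ∅ else haveI : NeZero p := ⟨hp⟩; univ.erase 0

variable {κ : Type*}

lemma one_div_le_norm_intCast_div {k : ℤ} {n : ℕ} (h : ¬ (n : ℤ) ∣ k) :
    1 / (n : ℝ) ≤ ‖((k / n : ℝ) : UnitAddCircle)‖ := by
  rcases n.eq_zero_or_pos with rfl | hn
  · simp
  have hn' : (0 : ℝ) < n := Nat.cast_pos.2 hn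
  set r := round ((k : ℝ) / n)
  have hne : k - n * r ≠ 0 := fun h0 => h ⟨r, by linarith⟩
  have h1 : (1 : ℝ) ≤ |((k - n * r : ℤ) : ℝ)| := by exact_mod_cast Int.one_le_abs hne
  rw [UnitAddCircle.norm_eq]
  calc 1 / (n : ℝ) ≤ |((k - n * r : ℤ) : ℝ)| / n := by gcongr
    _ = |(k : ℝ) / n - r| := by
        rw [← abs_of_pos hn', ← abs_div, abs_of_pos hn']; push_cast; field_simp

lemma fareyPhase_sub_fareyPhase {p q : ℕ} (hp : p ≠ 0) (hq : q ≠ 0) (h : κ → ZMod p)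
    (h' : κ → ZMod q) (i : κ) :
    fareyPhase h i - fareyPhase h' i =
      (((h i).val * q - (h' i).val * p : ℤ) : ℝ) / (p * q : ℕ) := by
  simp only [fareyPhase]
  push_cast
  field_simp

lemma exists_not_dvd_of_ne {p q : ℕ} (hp : p.Prime) (hq : q.Prime) {h : κ → ZMod p}
    {h' : κ → ZMod q} (hh : h ≠ 0) (hne : (⟨p, h⟩ : Σ p, κ → ZMod p) ≠ ⟨q, h'⟩) :
    ∃ i, ¬ ((p * q : ℕ) : ℤ) ∣ (h i).val * q - (h' i).val * p := by
  have : Fact p.Prime := ⟨hp⟩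
  by_cases hpq : p = q
  · subst hpq
    obtain ⟨i, hi⟩ := Function.ne_iff.1 fun e : h = h' => hne (e ▸ rfl)
    refine ⟨i, fun hd => hi ?_⟩
    rw [Nat.cast_mul, ← sub_mul, mul_comm] at hd
    have := (mul_dvd_mul_iff_right (Nat.cast_ne_zero.2 hp.ne_zero)).1 hd
    rw [← ZMod.intCast_zmod_eq_zero_iff_dvd] at this
    simpa [sub_eq_zero] using this
  · obtain ⟨i, hi⟩ := Function.ne_iff.1 hh
    refine ⟨i, fun hd => hi ?_⟩
    have hd' := (Int.natCast_dvd_natCast.2 (Nat.dvd_mul_right p q)).trans hd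
    rw [← ZMod.intCast_zmod_eq_zero_iff_dvd] at hd'
    have hq0 : (q : ZMod p) ≠ 0 := by
      rw [Ne, ZMod.natCast_eq_zero_iff]
      exact fun hdvd => hpq ((Nat.prime_dvd_prime_iff_eq hp hq).1 hdvd)
    simpa [hq0] using hd'

variable [Fintype κ] [DecidableEq κ]

lemma nonzeroFreqs_eq (p : ℕ) [NeZero p] : nonzeroFreqs κ p = univ.erase 0 := by
  rw [nonzeroFreqs, dif_neg (NeZero.ne p)]

noncomputable def sieveCoeff (Ω : ∀ p, Finset (κ → ZMod p)) (s : Σ p, κ → ZMod p) : ℂ :=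
  charSum (Ω s.1) s.2 / (s.1 : ℂ) ^ Fintype.card κ

lemma sieveDeviation_eq_expSum (P : Finset ℕ) (hP : ∀ p ∈ P, p ≠ 0)
    (Ω : ∀ p, Finset (κ → ZMod p)) (a : κ → ℤ) :
    (((#(P.filter fun p => (fun i => (a i : ZMod p)) ∈ Ω p) : ℝ) -
        ∑ p ∈ P, (#(Ω p) : ℝ) / (p : ℝ) ^ Fintype.card κ : ℝ) : ℂ) =
      expSum (P.sigma (nonzeroFreqs κ)) (sieveCoeff Ω) (fun s => fareyPhase s.2) a := by
  rw [card_filter, Nat.cast_sum, ← sum_sub_distrib, expSum, sum_sigma, ofReal_sum]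
  refine sum_congr rfl fun p hp => ?_
  have : NeZero p := ⟨hP p hp⟩
  simp only [nonzeroFreqs_eq, sieveCoeff, e_sum_mul_fareyPhase]
  rw [← indicator_sub_density_eq_sum]
  split_ifs <;> push_cast <;> rfl

lemma sum_sq_norm_sieveCoeff_le (P : Finset ℕ) (hP : ∀ p ∈ P, p ≠ 0)
    (Ω : ∀ p, Finset (κ → ZMod p)) :
    ∑ s ∈ P.sigma (nonzeroFreqs κ), ‖sieveCoeff Ω s‖ ^ 2 ≤
      ∑ p ∈ P, (#(Ω p) : ℝ) / (p : ℝ) ^ Fintype.card κ := by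
  rw [sum_sigma]
  refine sum_le_sum fun p hp => ?_
  have : NeZero p := ⟨hP p hp⟩
  have hp0 : (0 : ℝ) < (p : ℝ) ^ Fintype.card κ := pow_pos (Nat.cast_pos.2 (NeZero.pos p)) _
  simp only [nonzeroFreqs_eq, sieveCoeff, norm_div, norm_pow, Complex.norm_natCast, div_pow,
    ← sum_div]
  rw [div_le_div_iff₀ (by positivity) hp0]
  calc (∑ h ∈ univ.erase 0, ‖charSum (Ω p) h‖ ^ 2) * (p : ℝ) ^ Fintype.card κ
      ≤ (∑ h, ‖charSum (Ω p) h‖ ^ 2) * (p : ℝ) ^ Fintype.card κ := by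
        gcongr
        exact erase_subset _ _
    _ = #(Ω p) * ((p : ℝ) ^ Fintype.card κ) ^ 2 := by rw [sum_sq_norm_charSum]; ring

lemma pairwise_fareyPhase_spaced (P : Finset ℕ) (hP : ∀ p ∈ P, p.Prime) {M : ℕ}
    (hM : ∀ p ∈ P, ∀ q ∈ P, p * q ≤ M) :
    ((P.sigma (nonzeroFreqs κ) : Finset _) : Set (Σ p, κ → ZMod p)).Pairwise fun s t =>
      ∃ i, 1 / (M : ℝ) ≤ ‖((fareyPhase s.2 i - fareyPhase t.2 i : ℝ) : UnitAddCircle)‖ := by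
  rintro ⟨p, h⟩ hs ⟨q, h'⟩ ht hne
  simp only [coe_sigma, Set.mem_sigma_iff, mem_coe] at hs ht
  have hp := hP p hs.1
  have hq := hP q ht.1
  have : NeZero p := ⟨hp.ne_zero⟩
  have hh : h ≠ 0 := ne_of_mem_erase (nonzeroFreqs_eq (κ := κ) p ▸ hs.2)
  obtain ⟨i, hi⟩ := exists_not_dvd_of_ne hp hq hh hne
  refine ⟨i, ?_⟩
  rw [fareyPhase_sub_fareyPhase hp.ne_zero hq.ne_zero]
  refine le_trans ?_ (one_div_le_norm_intCast_div hi)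
  gcongr
  · exact Nat.cast_pos.2 (Nat.mul_pos hp.pos hq.pos)
  · exact_mod_cast hM p hs.1 q ht.1

end FareyPoints

lemma mul_le_ceil_sq {y : ℝ} (hy : 0 ≤ y) {p q : ℕ} (hp : p ≤ ⌊y⌋₊) (hq : q ≤ ⌊y⌋₊) :
    p * q ≤ ⌈y ^ 2⌉₊ := by
  have hp' : (p : ℝ) ≤ y := (Nat.cast_le.2 hp).trans (Nat.floor_le hy)
  have hq' : (q : ℝ) ≤ y := (Nat.cast_le.2 hq).trans (Nat.floor_le hy)
  have : ((p * q : ℕ) : ℝ) ≤ y ^ 2 := by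
    push_cast; nlinarith [Nat.cast_nonneg (α := ℝ) p, Nat.cast_nonneg (α := ℝ) q]
  exact_mod_cast this.trans (Nat.le_ceil _)

lemma abs_le_ceil_add_of_abs_intCast_le {n : ℤ} {x : ℝ} (h : |(n : ℝ)| ≤ x) (m : ℕ) :
    |n| ≤ (⌈x⌉₊ + m : ℕ) := by
  have := h.trans (Nat.le_ceil x)
  push_cast
  exact_mod_cast this.trans (le_add_of_nonneg_right (Nat.cast_nonneg _))

lemma nineteen_mul_ceil_add_ceil_le {x y : ℝ} (hx : 1 ≤ x) (hy : 2 ≤ y) :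
    19 * ((⌈x⌉₊ + ⌈y ^ 2⌉₊ : ℕ) : ℝ) ≤ 38 * (x + y ^ 2) := by
  have := Nat.ceil_lt_add_one (zero_le_one.trans hx)
  have := Nat.ceil_lt_add_one (sq_nonneg y)
  push_cast
  nlinarith

end LargeSieve

open LargeSieve

theorem multidimensional_large_sieve_general (g : ℕ) :
    ∃ C : ℝ, 0 < C ∧
      ∀ (X : Fin g → ℝ), (∀ i, 1 ≤ X i) →
      ∀ (R : Finset (Fin g → ℤ)), (∀ a : Fin g → ℤ, a ∈ R ↔ ∀ i, |(a i : ℝ)| ≤ X i) →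
      ∀ (y : ℝ), 2 ≤ y →
      ∀ (Ω : (p : ℕ) → Finset (Fin g → ZMod p)),
        ∑ a ∈ R,
          ((((Finset.range (Nat.floor y + 1)).filter
              (fun p => p.Prime ∧ (fun i => ((a i : ZMod p))) ∈ Ω p)).card : ℝ)
            - ∑ p ∈ (Finset.range (Nat.floor y + 1)).filter Nat.Prime,
                ((Ω p).card : ℝ) / (p : ℝ) ^ g) ^ 2
        ≤ C * (∑ p ∈ (Finset.range (Nat.floor y + 1)).filter Nat.Prime,
                ((Ω p).card : ℝ) / (p : ℝ) ^ g)
            * ∏ i, (X i + y ^ 2) := by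
  refine ⟨38 ^ g, by positivity, fun X hX R hR y hy Ω => ?_⟩
  set P := (range (⌊y⌋₊ + 1)).filter Nat.Prime
  have hP : ∀ p ∈ P, p.Prime ∧ p ≤ ⌊y⌋₊ := fun p hp => by
    rw [mem_filter, mem_range, Nat.lt_succ_iff] at hp
    exact hp.symm
  have hdev := sieveDeviation_eq_expSum P (fun p hp => (hP p hp).1.ne_zero) Ω
  have hcoeff := sum_sq_norm_sieveCoeff_le P (fun p hp => (hP p hp).1.ne_zero) Ω
  simp only [Fintype.card_fin] at hdev hcoeff
  calc _ = ∑ a ∈ R, ‖expSum (P.sigma (nonzeroFreqs (Fin g))) (sieveCoeff Ω)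
          (fun s => fareyPhase s.2) a‖ ^ 2 := sum_congr rfl fun a _ => by
        rw [← hdev a, norm_real, Real.norm_eq_abs, sq_abs, ← filter_filter]
    _ ≤ (∏ i, 19 * ((⌈X i⌉₊ + ⌈y ^ 2⌉₊ : ℕ) : ℝ)) *
          ∑ s ∈ P.sigma (nonzeroFreqs (Fin g)), ‖sieveCoeff Ω s‖ ^ 2 :=
        large_sieve _ _ _ (Nat.ceil_pos.2 (by positivity))
          (pairwise_fareyPhase_spaced P (fun p hp => (hP p hp).1)
            fun p hp q hq => mul_le_ceil_sq (by linarith) (hP p hp).2 (hP q hq).2)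
          _ (fun i => Nat.le_add_left _ _) R
          fun a ha i => abs_le_ceil_add_of_abs_intCast_le ((hR a).1 ha i) _
    _ ≤ (∏ i, 38 * (X i + y ^ 2)) * ∑ p ∈ P, (#(Ω p) : ℝ) / (p : ℝ) ^ g :=
        mul_le_mul (prod_le_prod (fun _ _ => by positivity)
            fun i _ => nineteen_mul_ceil_add_ceil_le (hX i) hy) hcoeff
          (by positivity) (prod_nonneg fun i _ => by nlinarith [hX i])
    _ = 38 ^ g * (∑ p ∈ P, (#(Ω p) : ℝ) / (p : ℝ) ^ g) * ∏ i, (X i + y ^ 2) := by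
        rw [prod_mul_distrib, prod_const, card_univ, Fintype.card_fin]; ring

/-- Lemma (lm-lg-sieve), the multidimensional large sieve inequality: with
`R = {a ∈ ℤ^g : |a_i| ≤ X_i}`, sets `Ω(p) ⊆ (ℤ/pℤ)^g` for primes `p ≤ y`,
`P(y) = Σ_{p ≤ y} |Ω(p)| p^{−g}` and
`P(a, y) = #{p ≤ y prime : a mod p ∈ Ω(p)}`, one has
`Σ_{a ∈ R} (P(a,y) − P(y))² ≤ C_g · P(y) · ∏ (X_i + y²)` for a constant `C_g`
depending only on `g`. -/
theorem multidimensional_large_sieve (g : ℕ) (hg : 1 ≤ g) :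
    ∃ C : ℝ, 0 < C ∧
      ∀ (X : Fin g → ℝ), (∀ i, 1 ≤ X i) →
      ∀ (R : Finset (Fin g → ℤ)), (∀ a : Fin g → ℤ, a ∈ R ↔ ∀ i, |(a i : ℝ)| ≤ X i) →
      ∀ (y : ℝ), 2 ≤ y →
      ∀ (Ω : (p : ℕ) → Finset (Fin g → ZMod p)),
        ∑ a ∈ R,
          ((((Finset.range (Nat.floor y + 1)).filter
              (fun p => p.Prime ∧ (fun i => ((a i : ZMod p))) ∈ Ω p)).card : ℝ)
            - ∑ p ∈ (Finset.range (Nat.floor y + 1)).filter Nat.Prime,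
                ((Ω p).card : ℝ) / (p : ℝ) ^ g) ^ 2
        ≤ C * (∑ p ∈ (Finset.range (Nat.floor y + 1)).filter Nat.Prime,
                ((Ω p).card : ℝ) / (p : ℝ) ^ g)
            * ∏ i, (X i + y ^ 2) :=
  multidimensional_large_sieve_general g
end

section
/- Let g ≥ 1 and let G ≤ S_{2g} be a transitive subgroup of the hyperoctahedral group W_{2g} (permutations of {1,…,2g} preserving the pairs {2i−1,2i}). If G contains a 2-cycle, a 4-cycle, a (2g−2)-cycle, and a 2g-cycle, then G = W_{2g}. -/
/-!
An element of `W_{2g}` permutes the `g` blocks; this gives a homomorphism `W_{2g} → S_g` whose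
kernel is generated by the flips `(2i−1 2i)`. A 2-cycle of `W_{2g}` is a flip, and conjugating it
by the transitive group `G` gives every flip, so `G` contains the kernel. A 4-cycle moves exactly
two blocks and, not being an involution, induces a transposition of blocks. A `(2g−2)`-cycle fixes
one block and its powers move any other block to any other, so the image of `G` in `S_g` is
2-transitive, hence primitive, and by Jordan's theorem a primitive group containing a transposition
is all of `S_g`.
-/

open Equiv Equiv.Perm MulAction Finset

theorem MulAction.is_two_pretransitive_of_stabilizer {G α : Type*} [Group G] [MulAction G α]
    [IsPretransitive G α] (a : α) (ha : ∀ x y, x ≠ a → y ≠ a → ∃ g : G, g • a = a ∧ g • x = y) :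
    IsMultiplyPretransitive G α 2 := by
  refine is_two_pretransitive_iff.2 fun {x₁ x₂ y₁ y₂} hx hy => ?_
  obtain ⟨g, hg⟩ := exists_smul_eq G x₁ a
  obtain ⟨h, hh⟩ := exists_smul_eq G y₁ a
  obtain ⟨k, hka, hk⟩ := ha (g • x₂) (h • y₂)
    (by rwa [← hg, Ne, smul_left_cancel_iff, eq_comm])
    (by rwa [← hh, Ne, smul_left_cancel_iff, eq_comm])
  refine ⟨h⁻¹ * k * g, ?_, ?_⟩
  · rw [mul_smul, mul_smul, hg, hka, ← hh, inv_smul_smul]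
  · rw [mul_smul, mul_smul, hk, inv_smul_smul]

theorem Subgroup.eq_top_of_map_eq_top_of_ker_le {G Q : Type*} [Group G] [Group Q] {f : G →* Q}
    {K : Subgroup G} (hmap : K.map f = ⊤) (hker : f.ker ≤ K) : K = ⊤ := by
  rw [← sup_eq_left.2 hker, ← comap_map_eq, hmap, comap_top]

namespace Hyperoctahedral

variable {ι : Type*}

def partner : Perm (ι × Bool) := prodCongr (Equiv.refl ι) boolNot

lemma partner_apply (x : ι × Bool) : partner x = (x.1, !x.2) := rfl

lemma partner_ne (x : ι × Bool) : partner x ≠ x := by simp [partner_apply, Prod.ext_iff]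

@[simp] lemma partner_partner (x : ι × Bool) : partner (partner x) = x := by simp [partner_apply]

lemma fst_eq_iff {x y : ι × Bool} : y.1 = x.1 ↔ y = x ∨ y = partner x := by
  obtain ⟨i, a⟩ := x; obtain ⟨j, b⟩ := y
  cases a <;> cases b <;> simp [partner_apply]

variable (ι) in
/-- `W_{2g}` is the centralizer of the fixed-point-free involution swapping the two points of each
block. -/
abbrev hyperoctahedral : Subgroup (Perm (ι × Bool)) := Subgroup.centralizer {partner}

lemma apply_partner {σ : Perm (ι × Bool)} (hσ : σ ∈ hyperoctahedral ι) (x : ι × Bool) :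
    σ (partner x) = partner (σ x) :=
  DFunLike.congr_fun (Subgroup.mem_centralizer_singleton_iff.1 hσ) x

lemma fst_apply_eq {σ : Perm (ι × Bool)} (hσ : σ ∈ hyperoctahedral ι) {x y : ι × Bool}
    (h : x.1 = y.1) : (σ x).1 = (σ y).1 := by
  rcases fst_eq_iff.1 h.symm with h | h <;> rw [h]
  rw [apply_partner hσ]
  rfl

lemma mem_hyperoctahedral_iff {σ : Perm (ι × Bool)} :
    σ ∈ hyperoctahedral ι ↔ ∀ x y : ι × Bool, x.1 = y.1 → (σ x).1 = (σ y).1 := by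
  refine ⟨fun hσ x y => fst_apply_eq hσ, fun hσ => Subgroup.mem_centralizer_singleton_iff.2 ?_⟩
  ext1 x
  rcases fst_eq_iff.1 (hσ (partner x) x rfl) with h | h
  · exact absurd (σ.injective h) (partner_ne x)
  · exact h

def blockPerm : hyperoctahedral ι →* Perm ι where
  toFun σ :=
    { toFun i := ((σ : Perm (ι × Bool)) (i, false)).1
      invFun i := ((σ⁻¹ : Perm (ι × Bool)) (i, false)).1
      left_inv i :=
        (fst_apply_eq (inv_mem σ.2) (x := (((σ : Perm (ι × Bool)) (i, false)).1, false))
          (y := (σ : Perm (ι × Bool)) (i, false)) rfl).trans (by simp)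
      right_inv i :=
        (fst_apply_eq σ.2 (x := (((σ⁻¹ : Perm (ι × Bool)) (i, false)).1, false))
          (y := (σ⁻¹ : Perm (ι × Bool)) (i, false)) rfl).trans (by simp) }
  map_one' := rfl
  map_mul' σ τ := by
    ext i
    exact fst_apply_eq σ.2 rfl

lemma blockPerm_apply_fst (σ : hyperoctahedral ι) (x : ι × Bool) :
    blockPerm σ x.1 = ((σ : Perm (ι × Bool)) x).1 :=
  fst_apply_eq σ.2 rfl

lemma blockPerm_eq_one_iff {σ : hyperoctahedral ι} :
    blockPerm σ = 1 ↔ ∀ x, ((σ : Perm (ι × Bool)) x).1 = x.1 := by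
  simp only [Perm.ext_iff, Prod.forall, Perm.one_apply]
  exact ⟨fun h i b => (blockPerm_apply_fst σ (i, b)).symm.trans (h i), fun h i => h i false⟩

lemma sq_eq_one_of_blockPerm_eq_one {σ : hyperoctahedral ι} (h : blockPerm σ = 1) :
    (σ : Perm (ι × Bool)) ^ 2 = 1 := by
  refine Equiv.ext fun x => ?_
  rw [sq, Perm.mul_apply, Perm.one_apply]
  rcases fst_eq_iff.1 (blockPerm_eq_one_iff.1 h x) with hx | hx
  · rw [hx, hx]
  · rw [hx, apply_partner σ.2, hx, partner_partner]

section Finite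

variable [DecidableEq ι]

lemma fst_swap_partner_apply (x y : ι × Bool) : (swap x (partner x) y).1 = y.1 := by
  rw [swap_apply_def]
  split_ifs with h₁ h₂
  exacts [h₁ ▸ rfl, h₂ ▸ rfl, rfl]

lemma exists_eq_swap_partner [Fintype ι] {σ : Perm (ι × Bool)}
    (hσ : σ ∈ hyperoctahedral ι) (h2 : #σ.support = 2) : ∃ x, σ = swap x (partner x) := by
  obtain ⟨a, b, hab, rfl⟩ := card_support_eq_two.1 h2
  refine ⟨a, congrArg _ ?_⟩
  by_contra hb
  have h := apply_partner hσ a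
  rw [swap_apply_left, swap_apply_of_ne_of_ne (partner_ne a) fun h => hb h.symm] at h
  exact hab (partner.injective h)

lemma forall_swap_partner_mem {G : Subgroup (Perm (ι × Bool))}
    (hGW : G ≤ hyperoctahedral ι) (htrans : ∀ x y : ι × Bool, ∃ σ ∈ G, σ x = y) {x₀ : ι × Bool}
    (h₀ : swap x₀ (partner x₀) ∈ G) (x : ι × Bool) : swap x (partner x) ∈ G := by
  obtain ⟨τ, hτ, rfl⟩ := htrans x₀ x
  rw [← apply_partner (hGW hτ), swap_apply_apply]
  exact mul_mem (mul_mem hτ h₀) (inv_mem hτ)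

variable [Fintype ι]

lemma partner_mem_support_iff {σ : Perm (ι × Bool)} (hσ : σ ∈ hyperoctahedral ι)
    {x : ι × Bool} : partner x ∈ σ.support ↔ x ∈ σ.support := by
  simp only [mem_support, apply_partner hσ, ne_eq, partner.injective.eq_iff]

lemma mem_of_forall_fst_apply_eq {G : Subgroup (Perm (ι × Bool))}
    (hflip : ∀ x, swap x (partner x) ∈ G) {δ : Perm (ι × Bool)} (hδ : ∀ x, (δ x).1 = x.1) :
    δ ∈ G := by
  induction hn : #δ.support using Nat.strong_induction_on generalizing δ with
  | _ n ih =>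
  rcases eq_or_ne δ 1 with rfl | hne
  · exact one_mem G
  obtain ⟨x, hx⟩ : ∃ x, δ x ≠ x := not_forall.1 fun h => hne (Perm.ext h)
  have hpx : δ x = partner x := (fst_eq_iff.1 (hδ x)).resolve_left hx
  rw [← swap_mul_self_mul x (δ x) δ]
  refine mul_mem (hpx ▸ hflip x) (ih _ (hn ▸ card_support_swap_mul hx) (fun y => ?_) rfl)
  rw [Perm.mul_apply, hpx, fst_swap_partner_apply, hδ]

lemma ker_blockPerm_le {G : Subgroup (Perm (ι × Bool))} (hflip : ∀ x, swap x (partner x) ∈ G) :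
    (blockPerm (ι := ι)).ker ≤ G.subgroupOf (hyperoctahedral ι) := fun _ hσ =>
  mem_of_forall_fst_apply_eq hflip (blockPerm_eq_one_iff.1 hσ)

lemma two_mul_card_support_blockPerm_le (σ : hyperoctahedral ι) :
    2 * #(blockPerm σ).support ≤ #(σ : Perm (ι × Bool)).support :=
  calc 2 * #(blockPerm σ).support = #((blockPerm σ).support ×ˢ (univ : Finset Bool)) := by
        rw [card_product, card_univ, Fintype.card_bool, mul_comm]
    _ ≤ _ := card_le_card fun x hx => mem_support.2 fun h =>
        mem_support.1 (mem_product.1 hx).1 (by rw [blockPerm_apply_fst, h])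

lemma isSwap_blockPerm_of_isCycle {σ : hyperoctahedral ι} (hc : (σ : Perm (ι × Bool)).IsCycle)
    (h4 : #(σ : Perm (ι × Bool)).support = 4) : (blockPerm σ).IsSwap := by
  have hne : blockPerm σ ≠ 1 := fun h => by
    have := orderOf_dvd_of_pow_eq_one (sq_eq_one_of_blockPerm_eq_one h)
    rw [hc.orderOf, h4] at this
    norm_num at this
  have := two_le_card_support_of_ne_one hne
  have := two_mul_card_support_blockPerm_le σ
  rw [← card_support_eq_two]
  omega

lemma exists_mem_support_iff_fst_ne {σ : Perm (ι × Bool)} (hσ : σ ∈ hyperoctahedral ι)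
    (hcard : #σ.support + 2 = Fintype.card (ι × Bool)) :
    ∃ p : ι, ∀ x, x ∈ σ.support ↔ x.1 ≠ p := by
  obtain ⟨x₀, hx₀⟩ : ∃ x₀, x₀ ∉ σ.support := by
    by_contra! h
    rw [eq_univ_of_forall h, card_univ] at hcard
    omega
  have hsub : σ.support ⊆ {x₀, partner x₀}ᶜ := fun x hx => by
    rw [mem_compl, mem_insert, mem_singleton]
    rintro (rfl | rfl)
    exacts [hx₀ hx, hx₀ ((partner_mem_support_iff hσ).1 hx)]
  have hsupp : σ.support = {x₀, partner x₀}ᶜ := eq_of_subset_of_card_le hsub (by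
    rw [card_compl, card_pair (partner_ne x₀).symm]
    omega)
  refine ⟨x₀.1, fun x => ?_⟩
  rw [hsupp, mem_compl, mem_insert, mem_singleton, Ne, fst_eq_iff]

lemma exists_blockPerm_pow_eq {σ : hyperoctahedral ι} (hc : (σ : Perm (ι × Bool)).IsCycle)
    {p : ι} (hp : ∀ x, x ∈ (σ : Perm (ι × Bool)).support ↔ x.1 ≠ p) {i j : ι} (hi : i ≠ p)
    (hj : j ≠ p) : ∃ m : ℕ, blockPerm (σ ^ m) p = p ∧ blockPerm (σ ^ m) i = j := by
  obtain ⟨m, hm⟩ := hc.exists_pow_eq (mem_support.1 ((hp (i, false)).2 hi))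
    (mem_support.1 ((hp (j, false)).2 hj))
  have hfix : (σ : Perm (ι × Bool)) (p, false) = (p, false) :=
    notMem_support.1 fun h => (hp _).1 h rfl
  exact ⟨m, (blockPerm_apply_fst (σ ^ m) (p, false)).trans
      (by rw [Subgroup.coe_pow, pow_apply_eq_self_of_apply_eq_self hfix]),
    (blockPerm_apply_fst (σ ^ m) (i, false)).trans (by rw [Subgroup.coe_pow, hm])⟩

lemma map_blockPerm_eq_top {G : Subgroup (Perm (ι × Bool))} (hGW : G ≤ hyperoctahedral ι)
    (htrans : ∀ x y : ι × Bool, ∃ σ ∈ G, σ x = y) {σ₄ σ : Perm (ι × Bool)} (hσ₄G : σ₄ ∈ G)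
    (hσ₄ : σ₄.IsCycle) (h4 : #σ₄.support = 4) (hσG : σ ∈ G) (hσ : σ.IsCycle)
    (hcard : #σ.support + 2 = Fintype.card (ι × Bool)) :
    (G.subgroupOf (hyperoctahedral ι)).map blockPerm = ⊤ := by
  set H := (G.subgroupOf (hyperoctahedral ι)).map blockPerm
  have hmem : ∀ τ : hyperoctahedral ι, (τ : Perm (ι × Bool)) ∈ G → blockPerm τ ∈ H :=
    fun τ hτ => ⟨τ, hτ, rfl⟩
  have : IsPretransitive H ι := ⟨fun i j => by
    obtain ⟨τ, hτ, hτij⟩ := htrans (i, false) (j, false)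
    exact ⟨⟨_, hmem ⟨τ, hGW hτ⟩ hτ⟩, (blockPerm_apply_fst ⟨τ, hGW hτ⟩ (i, false)).trans
      (by rw [Subgroup.coe_mk, hτij])⟩⟩
  obtain ⟨p, hp⟩ := exists_mem_support_iff_fst_ne (hGW hσG) hcard
  refine subgroup_eq_top_of_isPreprimitive_of_isSwap_mem (isPreprimitive_of_is_two_pretransitive
    (is_two_pretransitive_of_stabilizer p fun i j hi hj => ?_)) _
    (isSwap_blockPerm_of_isCycle (σ := ⟨σ₄, hGW hσ₄G⟩) hσ₄ h4) (hmem _ hσ₄G)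
  obtain ⟨m, hmp, hmi⟩ := exists_blockPerm_pow_eq (σ := ⟨σ, hGW hσG⟩) hσ hp hi hj
  exact ⟨⟨_, hmem _ (by simpa using pow_mem hσG m)⟩, hmp, hmi⟩

end Finite

end Hyperoctahedral

open Hyperoctahedral

theorem hyperoctahedral_criterion_general (g : ℕ)
    (G : Subgroup (Equiv.Perm (Fin g × Bool)))
    (hGW : ∀ σ ∈ G, ∀ x y : Fin g × Bool, x.1 = y.1 → (σ x).1 = (σ y).1)
    (htrans : ∀ x y : Fin g × Bool, ∃ σ ∈ G, σ x = y)
    (hcycles : ∀ ℓ ∈ ({2, 4, 2 * g - 2, 2 * g} : Finset ℕ),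
      ∃ σ ∈ G, σ.IsCycle ∧ σ.support.card = ℓ) :
    ∀ σ : Equiv.Perm (Fin g × Bool),
      (∀ x y : Fin g × Bool, x.1 = y.1 → (σ x).1 = (σ y).1) → σ ∈ G := by
  have hGW' : G ≤ hyperoctahedral (Fin g) := fun σ hσ => mem_hyperoctahedral_iff.2 (hGW σ hσ)
  obtain ⟨σ₂, hσ₂G, -, h2⟩ := hcycles 2 (by simp)
  obtain ⟨σ₄, hσ₄G, hσ₄, h4⟩ := hcycles 4 (by simp)
  obtain ⟨σ, hσG, hσ, hcard⟩ := hcycles (2 * g - 2) (by simp)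
  obtain ⟨x₀, rfl⟩ := exists_eq_swap_partner (hGW' hσ₂G) h2
  have hcard' : #σ.support + 2 = Fintype.card (Fin g × Bool) := by
    -- `2 * g - 2` is truncated, but a cycle moves at least two points, so `g ≥ 2`
    have := hσ.two_le_card_support
    simp only [Fintype.card_prod, Fintype.card_fin, Fintype.card_bool]
    omega
  have hW : G.subgroupOf (hyperoctahedral (Fin g)) = ⊤ :=
    Subgroup.eq_top_of_map_eq_top_of_ker_le
      (map_blockPerm_eq_top hGW' htrans hσ₄G hσ₄ h4 hσG hσ hcard')
      (ker_blockPerm_le (forall_swap_partner_mem hGW' htrans hσ₂G))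
  exact fun τ hτ => Subgroup.subgroupOf_eq_top.1 hW (mem_hyperoctahedral_iff.2 hτ)

/-- Criterion for a subgroup of the hyperoctahedral group to be the whole group
(Lemma 2 of [dds]).  Model `{1, …, 2g}` with its pairs `{2i−1, 2i}` as
`Fin g × Bool`; `W_{2g}` is the set of permutations preserving the first
coordinate pairing.  If a transitive subgroup `G` of `W_{2g}` contains a
2-cycle, a 4-cycle, a `(2g−2)`-cycle and a `2g`-cycle, then `G = W_{2g}`. -/
theorem hyperoctahedral_criterion (g : ℕ) (hg : 1 ≤ g)
    (G : Subgroup (Equiv.Perm (Fin g × Bool)))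
    (hGW : ∀ σ ∈ G, ∀ x y : Fin g × Bool, x.1 = y.1 → (σ x).1 = (σ y).1)
    (htrans : ∀ x y : Fin g × Bool, ∃ σ ∈ G, σ x = y)
    (hcycles : ∀ ℓ ∈ ({2, 4, 2 * g - 2, 2 * g} : Finset ℕ),
      ∃ σ ∈ G, σ.IsCycle ∧ σ.support.card = ℓ) :
    ∀ σ : Equiv.Perm (Fin g × Bool),
      (∀ x y : Fin g × Bool, x.1 = y.1 → (σ x).1 = (σ y).1) → σ ∈ G :=
  hyperoctahedral_criterion_general g G hGW htrans hcycles
end
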